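/- arXiv:2307.15817 — 7 statements merged into one kernel-verified Lean document; each statement's English description precedes it below -/
import Mathlib

section
/- For every integer n ≥ 5 there exist an integer p with 2 ≤ p ≤ n, a nonempty open interval I ⊆ ℝ, and continuous maps v₁,…,v_{n+1} : I → ℝⁿ such that, with η_p the pseudo-Euclidean bilinear form of signature (p, n−p), for every t ∈ I: (1) the vectors v₁(t),…,v_{n+1}(t) span ℝⁿ and Σ_{i=1}^{n+1} v_i(t) = 0 (so they are the vertices of an n-simplex with centroid at the origin O); (2) for every i, η_p(v_i(t), v_i(t)) > 0, and for every pair i < j the determinant det [[η_p(v_i(t),v_i(t)), η_p(v_i(t),v_j(t))],[η_p(v_j(t),v_i(t)), η_p(v_j(t),v_j(t))]] is a positive constant independent of t (so each triangle O P_i P_j has fixed area and lies in a Euclidean plane); (3) there exist indices i, j such that t ↦ η_p(v_i(t), v_j(t)) is not constant on I (so the simplices, with centroid fixed at O, are pairwise non-congruent). -/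
open Set

/-- The pseudo-Euclidean bilinear form of signature `(p, n-p)` on `ℝⁿ`. -/
noncomputable def eta (n p : ℕ) (x y : Fin n → ℝ) : ℝ :=
  ∑ i : Fin n, if (i : ℕ) < p then x i * y i else -(x i * y i)

namespace Flex

lemma eta_add_left {n p : ℕ} (x y z : Fin n → ℝ) :
    eta n p (x + y) z = eta n p x z + eta n p y z := by
  unfold eta
  rw [← Finset.sum_add_distrib]
  refine Finset.sum_congr rfl fun i _ => ?_
  by_cases h : (i : ℕ) < p <;> simp [h] <;> ring

lemma eta_smul_left {n p : ℕ} (c : ℝ) (x y : Fin n → ℝ) :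
    eta n p (c • x) y = c * eta n p x y := by
  unfold eta
  rw [Finset.mul_sum]
  refine Finset.sum_congr rfl fun i _ => ?_
  by_cases h : (i : ℕ) < p <;> simp [h] <;> ring

lemma eta_comm {n p : ℕ} (x y : Fin n → ℝ) : eta n p x y = eta n p y x := by
  unfold eta
  refine Finset.sum_congr rfl fun i _ => ?_
  by_cases h : (i : ℕ) < p <;> simp [h, mul_comm]

lemma eta_add_right {n p : ℕ} (x y z : Fin n → ℝ) :
    eta n p x (y + z) = eta n p x y + eta n p x z := by
  rw [eta_comm, eta_add_left, eta_comm y x, eta_comm z x]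

lemma eta_smul_right {n p : ℕ} (c : ℝ) (x y : Fin n → ℝ) :
    eta n p x (c • y) = c * eta n p x y := by
  rw [eta_comm, eta_smul_left, eta_comm]

def sing (n a : ℕ) : Fin n → ℝ := fun j => if (j : ℕ) = a then 1 else 0

def ones (n c : ℕ) : Fin n → ℝ := fun j => if (j : ℕ) < c then 1 else 0

lemma eta_zero_left {n p : ℕ} (y : Fin n → ℝ) : eta n p 0 y = 0 := by
  unfold eta; simp

lemma sing_oob {n a : ℕ} (ha : ¬ a < n) : sing n a = 0 := by
  funext j
  exact if_neg (by omega)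

lemma eta_sing_left {n p : ℕ} (a : ℕ) (ha : a < n) (y : Fin n → ℝ) :
    eta n p (sing n a) y = (if a < p then 1 else -1) * y ⟨a, ha⟩ := by
  unfold eta sing
  rw [Finset.sum_eq_single (⟨a, ha⟩ : Fin n)]
  · by_cases h : a < p <;> simp [h]
  · intro b _ hb
    have hba : ¬((b : ℕ) = a) := fun hh => hb (Fin.ext hh)
    by_cases h : (b : ℕ) < p <;> simp [hba, h]
  · intro h; exact absurd (Finset.mem_univ _) h

lemma HSS (k a b : ℕ) :
    eta (5+k) (4+k) (sing (5+k) a) (sing (5+k) b) =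
      if a < 5+k then (if a = b then (if a < 4+k then 1 else -1) else 0) else 0 := by
  by_cases ha : a < 5+k
  · rw [if_pos ha, eta_sing_left a ha]
    show _ * (if (a : ℕ) = b then (1:ℝ) else 0) = _
    by_cases hab : a = b <;> by_cases hp : a < 4+k <;> simp [hab, hp]
  · rw [if_neg ha, sing_oob ha, eta_zero_left]

lemma HO1 (k a : ℕ) :
    eta (5+k) (4+k) (sing (5+k) a) (ones (5+k) (k+2)) =
      if a < k+2 then 1 else 0 := by
  by_cases ha : a < 5+k
  · rw [eta_sing_left a ha]
    show _ * (if (a : ℕ) < k+2 then (1:ℝ) else 0) = _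
    by_cases h2 : a < k+2
    · rw [if_pos h2, if_pos (by omega : a < 4+k)]; norm_num
    · simp [h2]
  · rw [sing_oob ha, eta_zero_left]
    rw [if_neg (by omega)]

lemma HO2 (k a : ℕ) :
    eta (5+k) (4+k) (ones (5+k) (k+2)) (sing (5+k) a) =
      if a < k+2 then 1 else 0 := by
  rw [eta_comm]; exact HO1 k a

lemma HOO (k : ℕ) :
    eta (5+k) (4+k) (ones (5+k) (k+2)) (ones (5+k) (k+2)) = (k : ℝ) + 2 := by
  unfold eta ones
  have h1 : ∀ j : Fin (5+k),
      (if (j : ℕ) < 4+k then (if (j : ℕ) < k+2 then (1:ℝ) else 0) * (if (j : ℕ) < k+2 then 1 else 0)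
        else -((if (j : ℕ) < k+2 then (1:ℝ) else 0) * (if (j : ℕ) < k+2 then 1 else 0)))
      = if (j : ℕ) < k+2 then 1 else 0 := by
    intro j
    by_cases h : (j : ℕ) < k+2
    · rw [if_pos (by omega : (j:ℕ) < 4+k)]; simp [h]
    · by_cases h2 : (j : ℕ) < 4+k <;> simp [h, h2]
  rw [Finset.sum_congr rfl fun j _ => h1 j]
  rw [Fin.sum_univ_eq_sum_range (fun j => if j < k+2 then (1:ℝ) else 0) (5+k)]
  have h2 : ∀ j ∈ Finset.range (5+k),
      (if j < k+2 then (1:ℝ) else 0) = if j ∈ Finset.range (k+2) then 1 else 0 := by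
    intro j _; simp [Finset.mem_range]
  rw [Finset.sum_congr rfl h2, Finset.sum_ite_mem]
  have h3 : Finset.range (5+k) ∩ Finset.range (k+2) = Finset.range (k+2) := by
    ext j; simp [Finset.mem_range]; omega
  rw [h3, Finset.sum_const, Finset.card_range]
  push_cast
  ring_nf

def gvec (k m : ℕ) (cz c0 c1 cO cE cF cU : ℝ) : Fin (5+k) → ℝ :=
  cz • sing (5+k) m + c0 • sing (5+k) 0 + c1 • sing (5+k) 1 + cO • ones (5+k) (k+2) +
  cE • sing (5+k) (k+2) + cF • sing (5+k) (k+3) + cU • sing (5+k) (k+4)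

lemma eta_gvec (k m m' : ℕ) (hm : m ≤ k+1) (hm' : m' ≤ k+1)
    (cz c0 c1 cO cE cF cU cz' c0' c1' cO' cE' cF' cU' : ℝ) :
    eta (5+k) (4+k) (gvec k m cz c0 c1 cO cE cF cU) (gvec k m' cz' c0' c1' cO' cE' cF' cU') =
      cz*cz'*(if m = m' then 1 else 0) + cz*c0'*(if m = 0 then 1 else 0)
      + cz*c1'*(if m = 1 then 1 else 0) + c0*cz'*(if 0 = m' then 1 else 0)
      + c1*cz'*(if 1 = m' then 1 else 0) + cz*cO' + cO*cz' + c0*c0' + c1*c1'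
      + c0*cO' + cO*c0' + c1*cO' + cO*c1' + cO*cO'*((k:ℝ)+2)
      + cE*cE' + cF*cF' - cU*cU' := by
  have b1 : m < 5+k := by omega
  have b2 : m < 4+k := by omega
  have b3 : m < k+2 := by omega
  have b1' : m' < 5+k := by omega
  have b2' : m' < 4+k := by omega
  have b3' : m' < k+2 := by omega
  have c1a : ¬(m = k+2) := by omega
  have c2a : ¬(m = k+3) := by omega
  have c3a : ¬(m = k+4) := by omega
  have c1b : ¬(k+2 = m') := by omega
  have c2b : ¬(k+3 = m') := by omega
  have c3b : ¬(k+4 = m') := by omega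
  have d0 : (0:ℕ) < 5+k := by omega
  have d0' : (0:ℕ) < 4+k := by omega
  have d0'' : (0:ℕ) < k+2 := by omega
  have d1 : (1:ℕ) < 5+k := by omega
  have d1' : (1:ℕ) < 4+k := by omega
  have d1'' : (1:ℕ) < k+2 := by omega
  have e2 : k+2 < 5+k := by omega
  have e2' : k+2 < 4+k := by omega
  have e2'' : ¬(k+2 < k+2) := by omega
  have e3 : k+3 < 5+k := by omega
  have e3' : k+3 < 4+k := by omega
  have e3'' : ¬(k+3 < k+2) := by omega
  have e4 : k+4 < 5+k := by omega
  have e4' : ¬(k+4 < 4+k) := by omega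
  have e4'' : ¬(k+4 < k+2) := by omega
  have f1 : ¬(k+2 = 0) := by omega
  have f2 : ¬(k+3 = 0) := by omega
  have f3 : ¬(k+4 = 0) := by omega
  have f4 : ¬(k+2 = 1) := by omega
  have f5 : ¬(k+3 = 1) := by omega
  have f6 : ¬(k+4 = 1) := by omega
  have g1 : ¬(k+2 = k+3) := by omega
  have g2 : ¬(k+2 = k+4) := by omega
  have g3 : ¬(k+3 = k+2) := by omega
  have g4 : ¬(k+3 = k+4) := by omega
  have g5 : ¬(k+4 = k+2) := by omega
  have g6 : ¬(k+4 = k+3) := by omega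
  have h01 : ¬((0:ℕ) = 1) := by omega
  have h10 : ¬((1:ℕ) = 0) := by omega
  have i1 : ¬((0:ℕ) = 2+k) := by omega
  have i2 : ¬((0:ℕ) = 3+k) := by omega
  have i3 : ¬((0:ℕ) = 4+k) := by omega
  have i4 : ¬((1:ℕ) = 2+k) := by omega
  have i5 : ¬((1:ℕ) = 3+k) := by omega
  have i6 : ¬((1:ℕ) = 4+k) := by omega
  have i7 : ¬((0:ℕ) = k+2) := by omega
  have i8 : ¬((0:ℕ) = k+3) := by omega
  have i9 : ¬((0:ℕ) = k+4) := by omega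
  have i10 : ¬((1:ℕ) = k+2) := by omega
  have i11 : ¬((1:ℕ) = k+3) := by omega
  have i12 : ¬((1:ℕ) = k+4) := by omega
  unfold gvec
  simp only [eta_add_left, eta_add_right, eta_smul_left, eta_smul_right,
    HSS, HO1, HO2, HOO,
    b1, b2, b3, b1', b2', b3', c1a, c2a, c3a, c1b, c2b, c3b,
    d0, d0', d0'', d1, d1', d1'', e2, e2', e2'', e3, e3', e3'', e4, e4', e4'',
    f1, f2, f3, f4, f5, f6, i1, i2, i3, i4, i5, i6, i7, i8, i9, i10, i11, i12, g1, g2, g3, g4, g5, g6, h01, h10,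
    if_true, if_false, eq_self_iff_true]
  ring

noncomputable def gg (k : ℕ) : ℝ := (5*((k:ℝ)+2)*((k:ℝ)+1))/(10*(k:ℝ)+18)

noncomputable def tau (i : ℕ) : ℝ := if i = 2 then 2 else 1

noncomputable def vec (k i : ℕ) (t : ℝ) : Fin (5+k) → ℝ :=
  if i = 0 then gvec k 0 0 0 0 0 1 t 0
  else if i = 1 then gvec k 0 0 0 0 0 (-1) (-(1+t)) 0
  else if i ≤ k+3 then gvec k (i-2) 1 0 0 0 0 (tau i) 1
  else if i = k+4 then
    gvec k 0 0 (-(3*gg k/5)) (4*gg k/5) (-1) 0 (-(((k:ℝ)+2) - gg k)) (-(((k:ℝ)+2) - gg k))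
  else gvec k 0 0 (3*gg k/5) (-(4*gg k/5)) 0 0 (-(gg k)) (-(gg k))

lemma vec0 (k : ℕ) (t : ℝ) : vec k 0 t = gvec k 0 0 0 0 0 1 t 0 := if_pos rfl

lemma vec1 (k : ℕ) (t : ℝ) : vec k 1 t = gvec k 0 0 0 0 0 (-1) (-(1+t)) 0 := by
  unfold vec; rw [if_neg (by omega), if_pos rfl]

lemma vecc (k i : ℕ) (t : ℝ) (h2 : 2 ≤ i) (h3 : i ≤ k+3) :
    vec k i t = gvec k (i-2) 1 0 0 0 0 (tau i) 1 := by
  unfold vec; rw [if_neg (by omega), if_neg (by omega), if_pos h3]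

lemma veca (k : ℕ) (t : ℝ) :
    vec k (k+4) t =
      gvec k 0 0 (-(3*gg k/5)) (4*gg k/5) (-1) 0 (-(((k:ℝ)+2) - gg k)) (-(((k:ℝ)+2) - gg k)) := by
  unfold vec; rw [if_neg (by omega), if_neg (by omega), if_neg (by omega), if_pos rfl]

lemma vecb (k : ℕ) (t : ℝ) :
    vec k (k+5) t = gvec k 0 0 (3*gg k/5) (-(4*gg k/5)) 0 0 (-(gg k)) (-(gg k)) := by
  unfold vec
  rw [if_neg (by omega), if_neg (by omega), if_neg (by omega), if_neg (by omega)]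

lemma sum_sing (k : ℕ) :
    ∑ i ∈ Finset.range (k+2), sing (5+k) i = ones (5+k) (k+2) := by
  funext j
  rw [Finset.sum_apply]
  unfold sing ones
  rw [Finset.sum_ite_eq (Finset.range (k+2)) ((j:ℕ)) (fun _ => (1:ℝ))]
  simp [Finset.mem_range]

lemma tau_shift (i : ℕ) : tau (i+2) = 1 + (if i = 0 then 1 else 0) := by
  unfold tau
  rcases i with _ | i
  · norm_num
  · rw [if_neg (by omega), if_neg (by omega)]; norm_num

lemma sum_tau (k : ℕ) : ∑ i ∈ Finset.range (k+2), tau (i+2) = (k:ℝ)+3 := by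
  rw [Finset.sum_congr rfl fun i _ => tau_shift i]
  rw [Finset.sum_add_distrib, Finset.sum_const, Finset.card_range]
  rw [Finset.sum_ite_eq' (Finset.range (k+2)) 0 (fun _ => (1:ℝ))]
  simp [Finset.mem_range]
  push_cast
  ring

lemma sum_class (k : ℕ) (t : ℝ) :
    ∑ i ∈ Finset.range (k+2), vec k (i+2) t
      = ones (5+k) (k+2) + ((k:ℝ)+3) • sing (5+k) (k+3)
        + ((k:ℝ)+2) • sing (5+k) (k+4) := by
  have h1 : ∀ i ∈ Finset.range (k+2), vec k (i+2) t
      = sing (5+k) i + tau (i+2) • sing (5+k) (k+3) + sing (5+k) (k+4) := by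
    intro i hi
    rw [vecc k (i+2) t (by omega) (by have := Finset.mem_range.mp hi; omega : i+2 ≤ k+3)]
    show gvec k i 1 0 0 0 0 (tau (i+2)) 1 = _
    unfold gvec
    module
  rw [Finset.sum_congr rfl h1]
  rw [Finset.sum_add_distrib, Finset.sum_add_distrib, sum_sing]
  rw [← Finset.sum_smul, sum_tau, Finset.sum_const, Finset.card_range]
  rw [← Nat.cast_smul_eq_nsmul ℝ]
  push_cast
  module

lemma sum_all (k : ℕ) (t : ℝ) :
    ∑ i : Fin (5+k+1), vec k (i : ℕ) t = 0 := by
  have e : ∑ i : Fin (5+k+1), vec k (i : ℕ) t = ∑ i ∈ Finset.range (k+6), vec k i t := by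
    rw [Fin.sum_univ_eq_sum_range (fun i => vec k i t) (5+k+1)]
    have h : 5+k+1 = k+6 := by omega
    rw [h]
  rw [e, Finset.sum_range_succ, Finset.sum_range_succ,
    Finset.sum_range_succ', Finset.sum_range_succ']
  rw [sum_class k t, vec0, vec1, veca, vecb]
  unfold gvec
  module


lemma gg_pos (k : ℕ) : 0 < gg k := by
  unfold gg; positivity

lemma span_all (k : ℕ) (t : ℝ) :
    Submodule.span ℝ (Set.range fun i : Fin (5+k+1) => vec k (i : ℕ) t) = ⊤ := by
  set S := Submodule.span ℝ (Set.range fun i : Fin (5+k+1) => vec k (i : ℕ) t) with hS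
  have mem : ∀ i : ℕ, i < 5+k+1 → vec k i t ∈ S := fun i h =>
    Submodule.subset_span ⟨⟨i, h⟩, rfl⟩
  have hGne : gg k ≠ 0 := ne_of_gt (gg_pos k)
  have hF : sing (5+k) (k+3) ∈ S := by
    have he : sing (5+k) (k+3) = -(vec k 0 t + vec k 1 t) := by
      rw [vec0, vec1]; unfold gvec; module
    rw [he]; exact neg_mem (add_mem (mem 0 (by omega)) (mem 1 (by omega)))
  have hX : ∀ m : ℕ, m ≤ k+1 → sing (5+k) m + sing (5+k) (k+4) ∈ S := by
    intro m hm
    have he : sing (5+k) m + sing (5+k) (k+4)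
        = vec k (m+2) t - tau (m+2) • sing (5+k) (k+3) := by
      rw [vecc k (m+2) t (by omega) (by omega)]
      show _ = gvec k m 1 0 0 0 0 (tau (m+2)) 1 - _
      unfold gvec; module
    rw [he]; exact sub_mem (mem (m+2) (by omega)) (Submodule.smul_mem _ _ hF)
  have hU : sing (5+k) (k+4) ∈ S := by
    have he : sing (5+k) (k+4)
        = (-(5/(4*gg k))) • (vec k (k+5) t + gg k • sing (5+k) (k+3)
            - (3*gg k/5) • (sing (5+k) 0 + sing (5+k) (k+4))
            + (4*gg k/5) • (sing (5+k) 1 + sing (5+k) (k+4))) := by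
      rw [vecb]; unfold gvec
      match_scalars <;> field_simp <;> try ring
    rw [he]
    exact Submodule.smul_mem _ _
      (add_mem (sub_mem (add_mem (mem (k+5) (by omega)) (Submodule.smul_mem _ _ hF))
        (Submodule.smul_mem _ _ (hX 0 (by omega)))) (Submodule.smul_mem _ _ (hX 1 (by omega))))
  have hZ : ∀ m : ℕ, m ≤ k+1 → sing (5+k) m ∈ S := by
    intro m hm
    have he : sing (5+k) m = (sing (5+k) m + sing (5+k) (k+4)) - sing (5+k) (k+4) := by
      module
    rw [he]; exact sub_mem (hX m hm) hU
  have hE : sing (5+k) (k+2) ∈ S := by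
    have he : sing (5+k) (k+2) = vec k 0 t - t • sing (5+k) (k+3) := by
      rw [vec0]; unfold gvec; module
    rw [he]; exact sub_mem (mem 0 (by omega)) (Submodule.smul_mem _ _ hF)
  have hsing : ∀ j : Fin (5+k), sing (5+k) (j : ℕ) ∈ S := by
    intro j
    have hj : (j : ℕ) < 5+k := j.isLt
    by_cases h1 : (j : ℕ) ≤ k+1
    · exact hZ _ h1
    by_cases h2 : (j : ℕ) = k+2
    · rw [h2]; exact hE
    by_cases h3 : (j : ℕ) = k+3
    · rw [h3]; exact hF
    · have h4 : (j : ℕ) = k+4 := by omega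
      rw [h4]; exact hU
  rw [eq_top_iff]
  rintro x -
  have hx : x = ∑ j : Fin (5+k), x j • sing (5+k) (j : ℕ) := by
    funext j'
    rw [Finset.sum_apply]
    simp only [Pi.smul_apply, smul_eq_mul]
    rw [Finset.sum_eq_single j']
    · unfold sing; simp
    · intro b _ hb
      have : ¬((j' : ℕ) = (b : ℕ)) := fun hh => hb (Fin.ext hh.symm)
      unfold sing; simp [this]
    · intro h; exact absurd (Finset.mem_univ _) h
  rw [hx]
  exact Submodule.sum_smul_mem _ _ (fun j _ => hsing j)


lemma hg_id (k : ℕ) : gg k * (10*(k:ℝ)+18) = 5*((k:ℝ)+2)*((k:ℝ)+1) := by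
  unfold gg
  have h : (10*(k:ℝ)+18) ≠ 0 := by positivity
  field_simp

lemma kge (k : ℕ) : (0:ℝ) ≤ (k:ℝ) := Nat.cast_nonneg k

lemma F2 (k : ℕ) : gg k < (k:ℝ)+1 := by
  have h := hg_id k
  have hd : (0:ℝ) < 10*(k:ℝ)+18 := by positivity
  nlinarith [kge k]

lemma F3 (k : ℕ) : 8*gg k/5 < (k:ℝ)+1 := by
  have h := hg_id k
  have hd : (0:ℝ) < 10*(k:ℝ)+18 := by positivity
  nlinarith [kge k]

lemma F4 (k : ℕ) : 9*gg k/5 < (k:ℝ)+3 := by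
  have h := hg_id k
  have hd : (0:ℝ) < 10*(k:ℝ)+18 := by positivity
  nlinarith [kge k]

lemma F5 (k : ℕ) : 2*gg k < (k:ℝ)+2+1/5 := by
  have h := hg_id k
  have hd : (0:ℝ) < 10*(k:ℝ)+18 := by positivity
  nlinarith [kge k]

lemma FDG (k : ℕ) : 1 < ((k:ℝ)+2) - gg k := by
  have := F2 k
  linarith

end Flex

set_option maxHeartbeats 2000000 in
open Flex in
theorem stmt5 (n : ℕ) (hn : 5 ≤ n) :
    ∃ (p : ℕ) (a b : ℝ) (v : Fin (n + 1) → ℝ → (Fin n → ℝ)),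
      2 ≤ p ∧ p ≤ n ∧ a < b ∧
      (∀ i, ContinuousOn (v i) (Ioo a b)) ∧
      -- (1) the vertices span ℝⁿ and the centroid is the origin
      (∀ t ∈ Ioo a b,
        Submodule.span ℝ (Set.range fun i => v i t) = ⊤ ∧
        ∑ i, v i t = 0) ∧
      -- (2) each η(v_i, v_i) > 0 and each triangle O P_i P_j has fixed
      -- positive squared Gram determinant (fixed area, Euclidean plane)
      (∀ t ∈ Ioo a b, ∀ i, 0 < eta n p (v i t) (v i t)) ∧
      (∀ i j : Fin (n + 1), i < j →
        ∃ c : ℝ, 0 < c ∧ ∀ t ∈ Ioo a b,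
          eta n p (v i t) (v i t) * eta n p (v j t) (v j t) -
            eta n p (v i t) (v j t) * eta n p (v j t) (v i t) = c) ∧
      -- (3) non-congruence
      (∃ i j : Fin (n + 1), ∃ s ∈ Ioo a b, ∃ t ∈ Ioo a b,
        eta n p (v i s) (v j s) ≠ eta n p (v i t) (v j t)) := by
  obtain ⟨k, rfl⟩ := Nat.exists_eq_add_of_le hn
  refine ⟨4+k, 0, 1, fun i t => vec k (i : ℕ) t, by omega, by omega, by norm_num,
    ?_, ?_, ?_, ?_, ?_⟩
  · -- continuity
    intro i
    beta_reduce
    by_cases h0 : (i : ℕ) = 0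
    · have he : (fun t => vec k (i : ℕ) t) = fun t => gvec k 0 0 0 0 0 1 t 0 :=
        funext fun t => by rw [h0, vec0]
      rw [he]
      apply Continuous.continuousOn
      unfold gvec
      fun_prop
    by_cases h1 : (i : ℕ) = 1
    · have he : (fun t => vec k (i : ℕ) t) = fun t => gvec k 0 0 0 0 0 (-1) (-(1+t)) 0 :=
        funext fun t => by rw [h1, vec1]
      rw [he]
      apply Continuous.continuousOn
      unfold gvec
      fun_prop
    by_cases hc : (i : ℕ) ≤ k+3
    · have he : (fun t => vec k (i : ℕ) t)
          = fun _ => gvec k ((i:ℕ)-2) 1 0 0 0 0 (tau (i:ℕ)) 1 :=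
        funext fun t => by rw [vecc k (i:ℕ) t (by omega) hc]
      rw [he]
      exact continuousOn_const
    by_cases ha : (i : ℕ) = k+4
    · have he : (fun t => vec k (i : ℕ) t)
          = fun _ => gvec k 0 0 (-(3*gg k/5)) (4*gg k/5) (-1) 0 (-(((k:ℝ)+2) - gg k))
              (-(((k:ℝ)+2) - gg k)) :=
        funext fun t => by rw [ha, veca]
      rw [he]
      exact continuousOn_const
    · have hb : (i : ℕ) = k+5 := by have := i.isLt; omega
      have he : (fun t => vec k (i : ℕ) t)
          = fun _ => gvec k 0 0 (3*gg k/5) (-(4*gg k/5)) 0 0 (-(gg k)) (-(gg k)) :=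
        funext fun t => by rw [hb, vecb]
      rw [he]
      exact continuousOn_const
  · -- span and sum
    intro t ht
    exact ⟨span_all k t, sum_all k t⟩
  · -- diagonal positivity
    intro t ht i
    beta_reduce
    by_cases h0 : (i : ℕ) = 0
    · rw [h0, vec0, eta_gvec k 0 0 (by omega) (by omega)]
      nlinarith [sq_nonneg t]
    by_cases h1 : (i : ℕ) = 1
    · rw [h1, vec1, eta_gvec k 0 0 (by omega) (by omega)]
      nlinarith [sq_nonneg (1+t)]
    by_cases hc : (i : ℕ) ≤ k+3
    · rw [vecc k (i:ℕ) t (by omega) hc,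
        eta_gvec k ((i:ℕ)-2) ((i:ℕ)-2) (by omega) (by omega)]
      simp only [eq_self_iff_true, if_true]
      by_cases h2 : (i : ℕ) = 2 <;> simp [tau, h2] <;> nlinarith []
    by_cases ha : (i : ℕ) = k+4
    · rw [ha, veca, eta_gvec k 0 0 (by omega) (by omega)]
      nlinarith [hg_id k, gg_pos k, F2 k, kge k]
    · have hb : (i : ℕ) = k+5 := by have := i.isLt; omega
      rw [hb, vecb, eta_gvec k 0 0 (by omega) (by omega)]
      nlinarith [gg_pos k]
  · -- determinants
    intro i j hij
    beta_reduce
    have hiv : (i : ℕ) < (j : ℕ) := hij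
    have hj5 : (j : ℕ) < 5+k+1 := j.isLt
    by_cases hi0 : (i : ℕ) = 0
    · by_cases hj1 : (j : ℕ) = 1
      · refine ⟨1, one_pos, fun t ht => ?_⟩
        rw [hi0, hj1, vec0, vec1]
        simp only [eta_gvec k 0 0 (by omega) (by omega)]
        ring
      by_cases hjc : (j : ℕ) ≤ k+3
      · refine ⟨tau (j:ℕ) * tau (j:ℕ), ?_, fun t ht => ?_⟩
        · by_cases h2 : (j:ℕ) = 2 <;> simp [tau, h2] <;> norm_num
        · rw [hi0, vec0, vecc k (j:ℕ) t (by omega) hjc]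
          simp only [eta_gvec k 0 0 (by omega) (by omega),
            eta_gvec k 0 ((j:ℕ)-2) (by omega) (by omega),
            eta_gvec k ((j:ℕ)-2) 0 (by omega) (by omega),
            eta_gvec k ((j:ℕ)-2) ((j:ℕ)-2) (by omega) (by omega),
            eq_self_iff_true, if_true]
          ring
      by_cases hja : (j : ℕ) = k+4
      · refine ⟨(((k:ℝ)+2) - gg k)^2, by nlinarith [FDG k], fun t ht => ?_⟩
        rw [hi0, hja, vec0, veca]
        simp only [eta_gvec k 0 0 (by omega) (by omega)]
        linear_combination ((1+t*t)/5) * hg_id k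
      · have hjb : (j : ℕ) = k+5 := by omega
        refine ⟨gg k * gg k, by nlinarith [gg_pos k], fun t ht => ?_⟩
        rw [hi0, hjb, vec0, vecb]
        simp only [eta_gvec k 0 0 (by omega) (by omega)]
        ring
    by_cases hi1 : (i : ℕ) = 1
    · by_cases hjc : (j : ℕ) ≤ k+3
      · refine ⟨tau (j:ℕ) * tau (j:ℕ), ?_, fun t ht => ?_⟩
        · by_cases h2 : (j:ℕ) = 2 <;> simp [tau, h2] <;> norm_num
        · rw [hi1, vec1, vecc k (j:ℕ) t (by omega) hjc]
          simp only [eta_gvec k 0 0 (by omega) (by omega),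
            eta_gvec k 0 ((j:ℕ)-2) (by omega) (by omega),
            eta_gvec k ((j:ℕ)-2) 0 (by omega) (by omega),
            eta_gvec k ((j:ℕ)-2) ((j:ℕ)-2) (by omega) (by omega),
            eq_self_iff_true, if_true]
          ring
      by_cases hja : (j : ℕ) = k+4
      · refine ⟨(((k:ℝ)+2) - gg k)^2, by nlinarith [FDG k], fun t ht => ?_⟩
        rw [hi1, hja, vec1, veca]
        simp only [eta_gvec k 0 0 (by omega) (by omega)]
        linear_combination ((1+(1+t)*(1+t))/5) * hg_id k
      · have hjb : (j : ℕ) = k+5 := by omega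
        refine ⟨gg k * gg k, by nlinarith [gg_pos k], fun t ht => ?_⟩
        rw [hi1, hjb, vec1, vecb]
        simp only [eta_gvec k 0 0 (by omega) (by omega)]
        ring
    by_cases hic : (i : ℕ) ≤ k+3
    · -- i is a class index
      have hi2 : 2 ≤ (i : ℕ) := by omega
      by_cases hjc : (j : ℕ) ≤ k+3
      · refine ⟨tau (i:ℕ)*tau (i:ℕ)*(tau (j:ℕ)*tau (j:ℕ))
            - (tau (i:ℕ)*tau (j:ℕ) - 1)^2, ?_, fun t ht => ?_⟩
        · have hj2 : ¬((j:ℕ) = 2) := by omega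
          by_cases h2 : (i:ℕ) = 2 <;> simp [tau, h2, hj2] <;> norm_num
        · have hne : ¬(((i:ℕ)-2) = ((j:ℕ)-2)) := by omega
          have hne' : ¬(((j:ℕ)-2) = ((i:ℕ)-2)) := by omega
          rw [vecc k (i:ℕ) t hi2 hic, vecc k (j:ℕ) t (by omega) hjc]
          simp only [eta_gvec k ((i:ℕ)-2) ((i:ℕ)-2) (by omega) (by omega),
            eta_gvec k ((i:ℕ)-2) ((j:ℕ)-2) (by omega) (by omega),
            eta_gvec k ((j:ℕ)-2) ((i:ℕ)-2) (by omega) (by omega),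
            eta_gvec k ((j:ℕ)-2) ((j:ℕ)-2) (by omega) (by omega),
            if_neg hne, if_neg hne', eq_self_iff_true, if_true]
          ring
      by_cases hja : (j : ℕ) = k+4
      · -- class vs a-vector
        refine ⟨tau (i:ℕ)*tau (i:ℕ)*((((k:ℝ)+2) - gg k)^2)
            - ((if (i:ℕ) = 2 then -(3*gg k/5) else if (i:ℕ) = 3 then 4*gg k/5 else 0)
                - 1 + (((k:ℝ)+2) - gg k)*(1 - tau (i:ℕ)))^2, ?_, fun t ht => ?_⟩
        · by_cases h2 : (i:ℕ) = 2
          · have hA : 0 < (k:ℝ)+1 - 8*gg k/5 := by nlinarith [F3 k]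
            have hB : 0 < 3*((k:ℝ)+2) + 1 - 2*gg k - 2*gg k/5 := by
              nlinarith [F2 k, kge k]
            rw [h2]
            norm_num [tau]
            nlinarith [mul_pos hA hB]
          by_cases h3 : (i:ℕ) = 3
          · have hA : 0 < ((k:ℝ)+2) + 1 - 9*gg k/5 := by nlinarith [F4 k]
            have hB : 0 < ((k:ℝ)+2) - 1 - gg k/5 := by nlinarith [F2 k, gg_pos k]
            rw [h3]
            norm_num [tau]
            nlinarith [mul_pos hA hB]
          · have hA := FDG k
            simp only [tau, if_neg h2, if_neg h3]
            nlinarith [hA]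
        · rw [hja, vecc k (i:ℕ) t hi2 hic, veca]
          simp only [eta_gvec k ((i:ℕ)-2) ((i:ℕ)-2) (by omega) (by omega),
            eta_gvec k ((i:ℕ)-2) 0 (by omega) (by omega),
            eta_gvec k 0 ((i:ℕ)-2) (by omega) (by omega),
            eta_gvec k 0 0 (by omega) (by omega),
            eq_self_iff_true, if_true]
          by_cases h2 : (i:ℕ) = 2
          · rw [h2]
            norm_num [tau]
            linear_combination (4/5) * hg_id k
          by_cases h3 : (i:ℕ) = 3
          · rw [h3]
            norm_num [tau]
            linear_combination (1/5) * hg_id k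
          · have hm0 : ¬(((i:ℕ)-2) = 0) := by omega
            have hm1 : ¬(((i:ℕ)-2) = 1) := by omega
            have hm0' : ¬((0:ℕ) = (i:ℕ)-2) := by omega
            have hm1' : ¬((1:ℕ) = (i:ℕ)-2) := by omega
            simp only [tau, if_neg h2, if_neg h3, if_neg hm0, if_neg hm1,
              if_neg hm0', if_neg hm1']
            linear_combination (1/5) * hg_id k
      · -- class vs b-vector
        have hjb : (j : ℕ) = k+5 := by omega
        refine ⟨tau (i:ℕ)*tau (i:ℕ)*(gg k*gg k)
            - ((if (i:ℕ) = 2 then 3*gg k/5 else if (i:ℕ) = 3 then -(4*gg k/5) else 0)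
                + gg k - tau (i:ℕ)*gg k)^2, ?_, fun t ht => ?_⟩
        · by_cases h2 : (i:ℕ) = 2
          · rw [h2]
            norm_num [tau]
            nlinarith [mul_pos (gg_pos k) (gg_pos k)]
          by_cases h3 : (i:ℕ) = 3
          · rw [h3]
            norm_num [tau]
            nlinarith [mul_pos (gg_pos k) (gg_pos k)]
          · simp only [tau, if_neg h2, if_neg h3]
            nlinarith [mul_pos (gg_pos k) (gg_pos k)]
        · rw [hjb, vecc k (i:ℕ) t hi2 hic, vecb]
          simp only [eta_gvec k ((i:ℕ)-2) ((i:ℕ)-2) (by omega) (by omega),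
            eta_gvec k ((i:ℕ)-2) 0 (by omega) (by omega),
            eta_gvec k 0 ((i:ℕ)-2) (by omega) (by omega),
            eta_gvec k 0 0 (by omega) (by omega),
            eq_self_iff_true, if_true]
          by_cases h2 : (i:ℕ) = 2
          · rw [h2]
            norm_num [tau]
            ring
          by_cases h3 : (i:ℕ) = 3
          · rw [h3]
            norm_num [tau]
            ring
          · have hm0 : ¬(((i:ℕ)-2) = 0) := by omega
            have hm1 : ¬(((i:ℕ)-2) = 1) := by omega
            have hm0' : ¬((0:ℕ) = (i:ℕ)-2) := by omega
            have hm1' : ¬((1:ℕ) = (i:ℕ)-2) := by omega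
            simp only [tau, if_neg h2, if_neg h3, if_neg hm0, if_neg hm1,
              if_neg hm0', if_neg hm1']
            ring
    · -- i = k+4, j = k+5
      have hia : (i : ℕ) = k+4 := by omega
      have hjb : (j : ℕ) = k+5 := by omega
      refine ⟨(((k:ℝ)+2) - gg k)^2*(gg k*gg k) - (gg k/5 - gg k*gg k)^2, ?_, fun t ht => ?_⟩
      · have h1 : 0 < ((k:ℝ)+2) - 1/5 := by nlinarith [kge k]
        have h2 : 0 < ((k:ℝ)+2) + 1/5 - 2*gg k := by nlinarith [F5 k]
        nlinarith [mul_pos (mul_pos (gg_pos k) (gg_pos k)) (mul_pos h1 h2)]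
      · rw [hia, hjb, veca, vecb]
        simp only [eta_gvec k 0 0 (by omega) (by omega)]
        linear_combination (gg k * gg k / 5) * hg_id k
  · -- non-congruence witness
    refine ⟨⟨0, by omega⟩, ⟨2, by omega⟩, 1/3, by norm_num, 1/2, by norm_num, ?_⟩
    show eta _ _ (vec k 0 (1/3)) (vec k 2 (1/3)) ≠ eta _ _ (vec k 0 (1/2)) (vec k 2 (1/2))
    have hv2 : ∀ t : ℝ, vec k 2 t = gvec k 0 1 0 0 0 0 (tau 2) 1 := by
      intro t
      rw [vecc k 2 t (by omega) (by omega)]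
    rw [vec0, vec0, hv2, hv2]
    simp only [eta_gvec k 0 0 (by omega) (by omega), tau]
    norm_num
end

section
/- Let a₁, a₂, a₃ be nonzero reals with a₁ + a₂ + a₃ = 0 and b₂, b₃, b₄ be nonzero reals with b₂ + b₃ + b₄ = 0. Let A be the 4×4 matrix [[a₁², −a₁a₂, −a₁a₃, 0],[−a₁a₂, a₂², −a₂a₃, 0],[−a₁a₃, −a₂a₃, a₃², 0],[0, 0, 0, 0]] and B the 4×4 matrix [[0, 0, 0, 0],[0, b₂², −b₂b₃, −b₂b₄],[0, −b₂b₃, b₃², −b₃b₄],[0, −b₂b₄, −b₃b₄, b₄²]]. Then for every t > 0, det(tA + (1/t)B) = −4a₁²b₄²(a₂a₃t + b₂b₃/t)². In particular det(tA + (1/t)B) is negative for every t > 0 with t² ≠ −b₂b₃/(a₂a₃), and t ↦ det(tA + (1/t)B) is not constant on (0,∞). -/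
/-!
Eliminating a₁ = -a₂ - a₃ and b₄ = -b₂ - b₃, a Laplace expansion gives the homogeneous identity
det(tA + sB) = -4 a₁² b₄² · ts · (a₂a₃ t + b₂b₃ s)², and at s = 1/t the factor ts is 1.
The square vanishes only at t² = -b₂b₃/(a₂a₃), and since a₂a₃ ≠ 0 its values at t = 1, 2, 3
cannot all agree.
-/

theorem Matrix.det_fin_four {R : Type*} [CommRing R] (M : Matrix (Fin 4) (Fin 4) R) :
    M.det =
      M 0 0 * (M 1 1 * (M 2 2 * M 3 3 - M 2 3 * M 3 2) - M 1 2 * (M 2 1 * M 3 3 - M 2 3 * M 3 1)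
          + M 1 3 * (M 2 1 * M 3 2 - M 2 2 * M 3 1))
      - M 0 1 * (M 1 0 * (M 2 2 * M 3 3 - M 2 3 * M 3 2) - M 1 2 * (M 2 0 * M 3 3 - M 2 3 * M 3 0)
          + M 1 3 * (M 2 0 * M 3 2 - M 2 2 * M 3 0))
      + M 0 2 * (M 1 0 * (M 2 1 * M 3 3 - M 2 3 * M 3 1) - M 1 1 * (M 2 0 * M 3 3 - M 2 3 * M 3 0)
          + M 1 3 * (M 2 0 * M 3 1 - M 2 1 * M 3 0))
      - M 0 3 * (M 1 0 * (M 2 1 * M 3 2 - M 2 2 * M 3 1) - M 1 1 * (M 2 0 * M 3 2 - M 2 2 * M 3 0)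
          + M 1 2 * (M 2 0 * M 3 1 - M 2 1 * M 3 0)) := by
  simp [Matrix.det_succ_row_zero, Fin.sum_univ_succ, Fin.succAbove]
  ring

def matA (a₁ a₂ a₃ : ℝ) : Matrix (Fin 4) (Fin 4) ℝ :=
  !![a₁ ^ 2, -(a₁ * a₂), -(a₁ * a₃), 0;
     -(a₁ * a₂), a₂ ^ 2, -(a₂ * a₃), 0;
     -(a₁ * a₃), -(a₂ * a₃), a₃ ^ 2, 0;
     0, 0, 0, 0]

def matB (b₂ b₃ b₄ : ℝ) : Matrix (Fin 4) (Fin 4) ℝ :=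
  !![0, 0, 0, 0;
     0, b₂ ^ 2, -(b₂ * b₃), -(b₂ * b₄);
     0, -(b₂ * b₃), b₃ ^ 2, -(b₃ * b₄);
     0, -(b₂ * b₄), -(b₃ * b₄), b₄ ^ 2]

theorem det_smul_matA_add_smul_matB {a₁ a₂ a₃ b₂ b₃ b₄ : ℝ}
    (ha : a₁ + a₂ + a₃ = 0) (hb : b₂ + b₃ + b₄ = 0) (t s : ℝ) :
    (t • matA a₁ a₂ a₃ + s • matB b₂ b₃ b₄).det =
      -4 * a₁ ^ 2 * b₄ ^ 2 * (t * s) * (a₂ * a₃ * t + b₂ * b₃ * s) ^ 2 := by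
  obtain rfl : a₁ = -a₂ - a₃ := by linear_combination ha
  obtain rfl : b₄ = -b₂ - b₃ := by linear_combination hb
  rw [Matrix.det_fin_four]
  simp only [matA, matB, Matrix.smul_of, Matrix.smul_cons, Matrix.smul_empty, Matrix.add_apply,
    Matrix.of_apply, Matrix.cons_val', Matrix.cons_val_zero, Matrix.cons_val_one, Matrix.cons_val,
    Matrix.cons_val_fin_one, smul_eq_mul]
  ring

theorem mul_add_div_ne_zero {c d t : ℝ} (hc : c ≠ 0) (ht : t ≠ 0) (hne : t ^ 2 ≠ -d / c) :
    c * t + d / t ≠ 0 := by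
  contrapose! hne
  field_simp at hne ⊢
  linear_combination hne

theorem exists_sq_mul_add_div_ne {c : ℝ} (d : ℝ) (hc : c ≠ 0) :
    ∃ s t : ℝ, 0 < s ∧ 0 < t ∧ (c * s + d / s) ^ 2 ≠ (c * t + d / t) ^ 2 := by
  by_contra! h
  have h₂ := h 1 2 one_pos two_pos
  have h₃ := h 1 3 one_pos three_pos
  have : c ^ 2 = 0 := by linear_combination (4 / 15) * h₂ - (9 / 40) * h₃
  exact hc (pow_eq_zero_iff two_ne_zero |>.mp this)

theorem stmt7_general (a₁ a₂ a₃ b₂ b₃ b₄ : ℝ)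
    (ha₁ : a₁ ≠ 0) (ha₂ : a₂ ≠ 0) (ha₃ : a₃ ≠ 0) (hasum : a₁ + a₂ + a₃ = 0)
    (hb₄ : b₄ ≠ 0) (hbsum : b₂ + b₃ + b₄ = 0)
    (A B : Matrix (Fin 4) (Fin 4) ℝ)
    (hA : A = !![a₁ ^ 2, -(a₁ * a₂), -(a₁ * a₃), 0;
                 -(a₁ * a₂), a₂ ^ 2, -(a₂ * a₃), 0;
                 -(a₁ * a₃), -(a₂ * a₃), a₃ ^ 2, 0;
                 0, 0, 0, 0])
    (hB : B = !![0, 0, 0, 0;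
                 0, b₂ ^ 2, -(b₂ * b₃), -(b₂ * b₄);
                 0, -(b₂ * b₃), b₃ ^ 2, -(b₃ * b₄);
                 0, -(b₂ * b₄), -(b₃ * b₄), b₄ ^ 2]) :
    (∀ t : ℝ, 0 < t →
      (t • A + t⁻¹ • B).det =
        -4 * a₁ ^ 2 * b₄ ^ 2 * (a₂ * a₃ * t + b₂ * b₃ / t) ^ 2) ∧
    (∀ t : ℝ, 0 < t → t ^ 2 ≠ -(b₂ * b₃) / (a₂ * a₃) →
      (t • A + t⁻¹ • B).det < 0) ∧
    (∃ s t : ℝ, 0 < s ∧ 0 < t ∧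
      (s • A + s⁻¹ • B).det ≠ (t • A + t⁻¹ • B).det) := by
  have hdet (t : ℝ) (ht : 0 < t) : (t • A + t⁻¹ • B).det =
      -4 * a₁ ^ 2 * b₄ ^ 2 * (a₂ * a₃ * t + b₂ * b₃ / t) ^ 2 := by
    rw [hA, hB, ← matA, ← matB, det_smul_matA_add_smul_matB hasum hbsum,
      mul_inv_cancel₀ ht.ne', mul_one, div_eq_mul_inv]
  have hc : a₂ * a₃ ≠ 0 := mul_ne_zero ha₂ ha₃
  refine ⟨hdet, fun t ht hne ↦ ?_, ?_⟩
  · have := mul_add_div_ne_zero hc ht.ne' hne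
    have : 0 < 4 * a₁ ^ 2 * b₄ ^ 2 * (a₂ * a₃ * t + b₂ * b₃ / t) ^ 2 := by positivity
    linarith [hdet t ht]
  · obtain ⟨s, t, hs, ht, hst⟩ := exists_sq_mul_add_div_ne (b₂ * b₃) hc
    refine ⟨s, t, hs, ht, fun h ↦ hst ?_⟩
    rw [hdet s hs, hdet t ht] at h
    exact mul_left_cancel₀ (by positivity) h

theorem stmt7 (a₁ a₂ a₃ b₂ b₃ b₄ : ℝ)
    (ha₁ : a₁ ≠ 0) (ha₂ : a₂ ≠ 0) (ha₃ : a₃ ≠ 0) (hasum : a₁ + a₂ + a₃ = 0)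
    (hb₂ : b₂ ≠ 0) (hb₃ : b₃ ≠ 0) (hb₄ : b₄ ≠ 0) (hbsum : b₂ + b₃ + b₄ = 0)
    (A B : Matrix (Fin 4) (Fin 4) ℝ)
    (hA : A = !![a₁ ^ 2, -(a₁ * a₂), -(a₁ * a₃), 0;
                 -(a₁ * a₂), a₂ ^ 2, -(a₂ * a₃), 0;
                 -(a₁ * a₃), -(a₂ * a₃), a₃ ^ 2, 0;
                 0, 0, 0, 0])
    (hB : B = !![0, 0, 0, 0;
                 0, b₂ ^ 2, -(b₂ * b₃), -(b₂ * b₄);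
                 0, -(b₂ * b₃), b₃ ^ 2, -(b₃ * b₄);
                 0, -(b₂ * b₄), -(b₃ * b₄), b₄ ^ 2]) :
    (∀ t : ℝ, 0 < t →
      (t • A + t⁻¹ • B).det =
        -4 * a₁ ^ 2 * b₄ ^ 2 * (a₂ * a₃ * t + b₂ * b₃ / t) ^ 2) ∧
    (∀ t : ℝ, 0 < t → t ^ 2 ≠ -(b₂ * b₃) / (a₂ * a₃) →
      (t • A + t⁻¹ • B).det < 0) ∧
    (∃ s t : ℝ, 0 < s ∧ 0 < t ∧
      (s • A + s⁻¹ • B).det ≠ (t • A + t⁻¹ • B).det) :=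
  stmt7_general a₁ a₂ a₃ b₂ b₃ b₄ ha₁ ha₂ ha₃ hasum hb₄ hbsum A B hA hB
end

section
/- Let m ≥ 3, and let C be the 2m×2m real matrix whose (i,j) entry is 1 if ⌈i/2⌉ = ⌈j/2⌉ and −1 otherwise, and let C' be the 2m×2m matrix obtained from C by moving its last row and last column to the first row and first column (so C'_{ij} = 1 if i and j lie in the same block of the partition {{2m, 1}, {2, 3}, {4, 5}, …, {2m−2, 2m−1}} of {1,…,2m}, and C'_{ij} = −1 otherwise). Then there exist vectors d, d' ∈ ℝ^{2m} with all entries nonzero, satisfying d_{2k} = −d_{2k−1} for 1 ≤ k ≤ m, d'_{2k+1} = −d'_{2k} for 1 ≤ k ≤ m−1 and d'₁ = −d'_{2m}, such that, setting D = diag(d), D' = diag(d'), A = D C D and B = D' C' D': A·𝟏 = 0, B·𝟏 = 0, every 2×2 principal minor of A and of B is zero, A + B has rank 2m − 1, and every 2×2 principal minor of A + B is positive. -/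
open Finset

namespace Stmt11Aux

noncomputable def sN (j : ℕ) : ℝ := if j % 2 = 0 then 1 else -1
def wN (m j : ℕ) : ℕ := if j = 0 ∨ j = 2*m - 1 then m else (j+1)/2
def bN (m j : ℕ) : ℕ := if j = 0 ∨ j = 2*m - 1 then 0 else (j+1)/2
noncomputable def d'N (m j : ℕ) : ℝ := -(sN j) * (wN m j)
noncomputable def yF (x' : ℕ → ℝ) (j : ℕ) : ℝ := sN j * x' j
noncomputable def zF (m : ℕ) (x' : ℕ → ℝ) (j : ℕ) : ℝ := (wN m j : ℝ) * yF x' j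
noncomputable def pF (x' : ℕ → ℝ) (k : ℕ) : ℝ := yF x' (2*k) + yF x' (2*k+1)
noncomputable def uF (m : ℕ) (x' : ℕ → ℝ) (k : ℕ) : ℝ :=
  if k = m then yF x' (2*m-1) + yF x' 0 else yF x' (2*k-1) + yF x' (2*k)
noncomputable def Hm (m : ℕ) : ℝ := ∑ k ∈ range m, 1/((k:ℝ)+1)
noncomputable def H2m (m : ℕ) : ℝ := ∑ k ∈ range m, 1/((k:ℝ)+1)^2

lemma sN_cases (j : ℕ) : sN j = 1 ∨ sN j = -1 := by
  unfold sN; split <;> simp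

lemma sN_sq (j : ℕ) : sN j * sN j = 1 := by
  rcases sN_cases j with h | h <;> rw [h] <;> norm_num

lemma sN_ne (j : ℕ) : sN j ≠ 0 := by
  rcases sN_cases j with h | h <;> rw [h] <;> norm_num

lemma sN_even {j : ℕ} (h : j % 2 = 0) : sN j = 1 := by unfold sN; rw [if_pos h]

lemma sN_odd {j : ℕ} (h : j % 2 = 1) : sN j = -1 := by unfold sN; rw [if_neg (by omega)]

lemma wN_pos {m j : ℕ} (hm : 3 ≤ m) : 1 ≤ wN m j := by
  unfold wN; split <;> omega

lemma wN_zero (m : ℕ) : wN m 0 = m := by unfold wN; rw [if_pos (Or.inl rfl)]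

lemma wN_last (m : ℕ) : wN m (2*m-1) = m := by unfold wN; rw [if_pos (Or.inr rfl)]

lemma wN_oddk {m k : ℕ} (hm : 3 ≤ m) (h1 : 1 ≤ k) (h2 : k ≤ m-1) : wN m (2*k-1) = k := by
  unfold wN; rw [if_neg (by omega)]; omega

lemma wN_evenk {m k : ℕ} (hm : 3 ≤ m) (h1 : 1 ≤ k) (h2 : k ≤ m-1) : wN m (2*k) = k := by
  unfold wN; rw [if_neg (by omega)]; omega

lemma bN_zero (m : ℕ) : bN m 0 = 0 := by unfold bN; rw [if_pos (Or.inl rfl)]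

lemma bN_last (m : ℕ) : bN m (2*m-1) = 0 := by unfold bN; rw [if_pos (Or.inr rfl)]

lemma bN_odd {m k : ℕ} (hm : 3 ≤ m) (hk : k < m-1) : bN m (2*k+1) = k+1 := by
  unfold bN; rw [if_neg (by omega)]; omega

lemma bN_even {m k : ℕ} (hm : 3 ≤ m) (hk : k < m-1) : bN m (2*k+2) = k+1 := by
  unfold bN; rw [if_neg (by omega)]; omega

lemma bN_range {m i : ℕ} (hm : 3 ≤ m) (hi : i < 2*m) (h : bN m i ≠ 0) :
    1 ≤ bN m i ∧ bN m i ≤ m - 1 := by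
  unfold bN at *
  split_ifs at h ⊢ with hc <;> omega

lemma wN_of_bN_zero {m i : ℕ} (hm : 3 ≤ m) (hi : i < 2*m) (h : bN m i = 0) :
    wN m i = m := by
  unfold bN wN at * ; split_ifs at * <;> omega

lemma wN_of_bN_ne {m i : ℕ} (hm : 3 ≤ m) (hi : i < 2*m) (h : bN m i ≠ 0) :
    wN m i = bN m i := by
  unfold bN wN at * ; split_ifs at * <;> omega

lemma blk_same_w {m i j : ℕ} (hm : 3 ≤ m) (hi : i < 2*m) (hj : j < 2*m)
    (h : bN m i = bN m j) : wN m i = wN m j := by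
  unfold bN wN at * ; split_ifs at * <;> omega

lemma blk_same_C {m i j : ℕ} (hm : 3 ≤ m) (hi : i < 2*m) (hj : j < 2*m)
    (hij : i ≠ j) (h : bN m i = bN m j) : ¬ i/2 = j/2 := by
  unfold bN at h ; split_ifs at h <;> omega

lemma blk_diff_w {m i j : ℕ} (hm : 3 ≤ m) (hi : i < 2*m) (hj : j < 2*m)
    (h : ¬ bN m i = bN m j) : ¬ wN m i = wN m j := by
  unfold bN wN at * ; split_ifs at * <;> omega

lemma sum_pair (f : ℕ → ℝ) (n : ℕ) :
    ∑ j ∈ range (2*n), f j = ∑ k ∈ range n, (f (2*k) + f (2*k+1)) := by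
  induction n with
  | zero => simp
  | succ n ih =>
    rw [show 2*(n+1) = 2*n+1+1 from by ring, Finset.sum_range_succ,
      Finset.sum_range_succ, Finset.sum_range_succ, ih]
    ring

lemma sum_shift (f : ℕ → ℝ) (m : ℕ) (hm : 1 ≤ m) :
    ∑ j ∈ range (2*m), f j
      = (f 0 + f (2*m-1)) + ∑ k ∈ range (m-1), (f (2*k+1) + f (2*k+2)) := by
  obtain ⟨n, rfl⟩ : ∃ n, m = n + 1 := ⟨m - 1, by omega⟩
  rw [show 2*(n+1) = (2*n+1)+1 from by ring, Finset.sum_range_succ,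
    Finset.sum_range_succ']
  rw [show 2*n+1+1-1 = 2*n+1 from rfl, show n+1-1 = n from rfl,
    sum_pair (fun i => f (i+1)) n]
  simp only [show ∀ k:ℕ, 2*k+1+1 = 2*k+2 from fun k => rfl]
  ring

lemma sumC (m i : ℕ) (hi : i < 2*m) (y : ℕ → ℝ) :
    ∑ j ∈ range (2*m), (if i/2 = j/2 then (1:ℝ) else -1) * y j
      = 2*(y (2*(i/2)) + y (2*(i/2)+1)) - ∑ j ∈ range (2*m), y j := by
  have h : ∀ j, (if i/2 = j/2 then (1:ℝ) else -1) * y j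
      = 2*(if i/2 = j/2 then y j else 0) - y j := by
    intro j; split <;> ring
  simp only [h]
  rw [Finset.sum_sub_distrib, ← Finset.mul_sum]
  congr 1
  have h3 : ∑ j ∈ range (2*m), (if i/2 = j/2 then y j else 0)
      = y (2*(i/2)) + y (2*(i/2)+1) := by
    rw [sum_pair]
    have h2 : ∀ k ∈ range m,
        ((if i/2 = (2*k)/2 then y (2*k) else 0) + (if i/2 = (2*k+1)/2 then y (2*k+1) else 0))
        = (if i/2 = k then y (2*k) + y (2*k+1) else 0) := by
      intro k _
      rw [show (2*k)/2 = k from by omega, show (2*k+1)/2 = k from by omega]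
      split <;> simp
    rw [Finset.sum_congr rfl h2, Finset.sum_ite_eq]
    rw [if_pos (Finset.mem_range.mpr (by omega))]
  rw [h3]

lemma sumC' (m i : ℕ) (hm : 3 ≤ m) (hi : i < 2*m) (z : ℕ → ℝ) :
    ∑ j ∈ range (2*m), (if bN m i = bN m j then (1:ℝ) else -1) * z j
      = 2*(if bN m i = 0 then z 0 + z (2*m-1) else z (2*(bN m i)-1) + z (2*(bN m i)))
        - ∑ j ∈ range (2*m), z j := by
  have h : ∀ j, (if bN m i = bN m j then (1:ℝ) else -1) * z j
      = 2*(if bN m i = bN m j then z j else 0) - z j := by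
    intro j; split <;> ring
  simp only [h]
  rw [Finset.sum_sub_distrib, ← Finset.mul_sum]
  congr 1
  rw [sum_shift _ m (by omega), bN_zero, bN_last]
  have h2 : ∀ k ∈ range (m-1),
      ((if bN m i = bN m (2*k+1) then z (2*k+1) else 0)
        + (if bN m i = bN m (2*k+2) then z (2*k+2) else 0))
      = (if bN m i = k+1 then z (2*k+1) + z (2*k+2) else 0) := by
    intro k hk
    rw [bN_odd hm (Finset.mem_range.mp hk), bN_even hm (Finset.mem_range.mp hk)]
    split <;> simp
  rw [Finset.sum_congr rfl h2]
  by_cases hb : bN m i = 0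
  · rw [if_pos hb]
    have h4 : ∀ k ∈ range (m-1), (if bN m i = k+1 then z (2*k+1) + z (2*k+2) else 0) = 0 := by
      intro k _; rw [if_neg (by omega)]
    rw [Finset.sum_eq_zero h4, if_pos hb, if_pos hb]
    ring
  · obtain ⟨hb1, hb2⟩ := bN_range hm hi hb
    rw [if_neg hb, if_neg (by omega), if_neg (by omega)]
    rw [Finset.sum_eq_single_of_mem (bN m i - 1) (Finset.mem_range.mpr (by omega))
      (fun b _ hb' => by rw [if_neg (by omega)])]
    rw [if_pos (by omega), show 2*(bN m i - 1)+1 = 2*(bN m i)-1 from by omega,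
      show 2*(bN m i - 1)+2 = 2*(bN m i) from by omega]
    ring

lemma d'N_pair_last {m : ℕ} (hm : 3 ≤ m) : d'N m 0 + d'N m (2*m-1) = 0 := by
  unfold d'N
  rw [wN_zero, wN_last, sN_even (by omega), sN_odd (by omega)]
  ring

lemma d'N_pair {m k : ℕ} (hm : 3 ≤ m) (hk : k < m-1) :
    d'N m (2*k+1) + d'N m (2*k+2) = 0 := by
  unfold d'N
  have h1 : wN m (2*k+1) = k+1 := by
    rw [show 2*k+1 = 2*(k+1)-1 from by omega]; exact wN_oddk hm (by omega) (by omega)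
  have h2 : wN m (2*k+2) = k+1 := by
    rw [show 2*k+2 = 2*(k+1) from by omega]; exact wN_evenk hm (by omega) (by omega)
  rw [h1, h2, sN_odd (by omega), sN_even (by omega)]
  ring

lemma sum_d'N {m : ℕ} (hm : 3 ≤ m) : ∑ j ∈ range (2*m), d'N m j = 0 := by
  rw [sum_shift _ m (by omega), d'N_pair_last hm]
  rw [Finset.sum_eq_zero (fun k hk => d'N_pair hm (Finset.mem_range.mp hk))]
  ring

lemma sum_sN {m : ℕ} : ∑ j ∈ range (2*m), sN j = 0 := by
  rw [sum_pair]
  apply Finset.sum_eq_zero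
  intro k _
  rw [sN_even (by omega), sN_odd (by omega)]
  ring

lemma Hm_split (m : ℕ) (hm : 1 ≤ m) :
    Hm m = (∑ k ∈ range (m-1), 1/((k:ℝ)+1)) + 1/(m:ℝ) := by
  unfold Hm
  conv_lhs => rw [show m = (m-1)+1 from by omega, Finset.sum_range_succ]
  rw [Nat.cast_sub (by omega)]
  norm_num

lemma H2m_split (m : ℕ) (hm : 1 ≤ m) :
    H2m m = (∑ k ∈ range (m-1), 1/((k:ℝ)+1)^2) + 1/(m:ℝ)^2 := by
  unfold H2m
  conv_lhs => rw [show m = (m-1)+1 from by omega, Finset.sum_range_succ]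
  rw [Nat.cast_sub (by omega)]
  norm_num

lemma H2m_nonneg (m : ℕ) : 0 ≤ H2m m := by
  unfold H2m; apply Finset.sum_nonneg; intro k _; positivity

lemma H2m_le (m : ℕ) (hm : 1 ≤ m) : H2m m ≤ 2 - 1/(m:ℝ) := by
  induction m with
  | zero => omega
  | succ n ih =>
    rcases Nat.eq_zero_or_pos n with hn | hn
    · subst hn; unfold H2m; norm_num
    · have h1 := ih hn
      have hn0 : (0:ℝ) < n := by exact_mod_cast hn
      have hn1 : (0:ℝ) < (n:ℝ)+1 := by linarith
      have key : 1/((n:ℝ)+1)^2 ≤ 1/(n:ℝ) - 1/((n:ℝ)+1) := by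
        rw [div_sub_div _ _ (ne_of_gt hn0) (ne_of_gt hn1), div_le_div_iff₀ (by positivity) (by positivity)]
        ring_nf
        nlinarith
      have h2 : H2m (n+1) = H2m n + 1/((n:ℝ)+1)^2 := by
        unfold H2m; rw [Finset.sum_range_succ]
      rw [h2]
      push_cast
      linarith

end Stmt11Aux

open Stmt11Aux

/-- The `2m × 2m` matrix `C`: entry `(i,j)` is `1` when `i, j` lie in the same
block `{2k-1, 2k}` (1-indexed), i.e. `⌈i/2⌉ = ⌈j/2⌉`, and `-1` otherwise.
(Here indices are 0-indexed, so the blocks are `{0,1}, {2,3}, …`.) -/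
noncomputable def Cmat (m : ℕ) : Matrix (Fin (2 * m)) (Fin (2 * m)) ℝ :=
  Matrix.of fun i j => if (i : ℕ) / 2 = (j : ℕ) / 2 then 1 else -1

/-- The `2m × 2m` matrix `C'` obtained from `C` by moving the last row and column
to the front: entry `(i,j)` is `1` when `i, j` lie in the same block of the
partition `{{2m, 1}, {2, 3}, …, {2m-2, 2m-1}}` (1-indexed; 0-indexed blocks
`{2m-1, 0}, {1, 2}, …, {2m-3, 2m-2}`), and `-1` otherwise. -/
noncomputable def Cmat' (m : ℕ) : Matrix (Fin (2 * m)) (Fin (2 * m)) ℝ :=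
  Matrix.of fun i j =>
    if (if (i : ℕ) = 0 ∨ (i : ℕ) = 2 * m - 1 then 0 else ((i : ℕ) + 1) / 2) =
        (if (j : ℕ) = 0 ∨ (j : ℕ) = 2 * m - 1 then 0 else ((j : ℕ) + 1) / 2)
    then 1 else -1

namespace Stmt11Aux

lemma Cmat'_eq (m : ℕ) (i j : Fin (2*m)) :
    Cmat' m i j = if bN m (i:ℕ) = bN m (j:ℕ) then (1:ℝ) else -1 := rfl

/-- The kernel computation: any vector in the kernel of `A + B` is constant. -/
lemma ker_const (m : ℕ) (hm : 3 ≤ m) (x' : ℕ → ℝ)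
    (hx : ∀ i, i < 2*m → ∑ j ∈ range (2*m),
      (sN i * (if i/2 = j/2 then (1:ℝ) else -1) * sN j
        + d'N m i * (if bN m i = bN m j then (1:ℝ) else -1) * d'N m j) * x' j = 0) :
    ∀ j, j < 2*m → x' j = x' 0 := by
  have hmr : (3:ℝ) ≤ (m:ℝ) := by exact_mod_cast hm
  have hm0 : (0:ℝ) < (m:ℝ) := by linarith
  set Sy := ∑ j ∈ range (2*m), yF x' j with hSydef
  set Sz := ∑ j ∈ range (2*m), zF m x' j with hSzdef
  -- master equation
  have hE : ∀ i, i < 2*m →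
      2 * pF x' (i/2) - Sy + (wN m i : ℝ) * (2 * ((wN m i : ℝ) * uF m x' (wN m i)) - Sz) = 0 := by
    intro i hi
    have h0 := hx i hi
    have h1 : ∑ j ∈ range (2*m), ((if i/2 = j/2 then (1:ℝ) else -1) * yF x' j
        + (wN m i : ℝ) * ((if bN m i = bN m j then (1:ℝ) else -1) * zF m x' j)) = 0 := by
      have h2 : ∀ j ∈ range (2*m), ((if i/2 = j/2 then (1:ℝ) else -1) * yF x' j
          + (wN m i : ℝ) * ((if bN m i = bN m j then (1:ℝ) else -1) * zF m x' j))
          = sN i * ((sN i * (if i/2 = j/2 then (1:ℝ) else -1) * sN j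
            + d'N m i * (if bN m i = bN m j then (1:ℝ) else -1) * d'N m j) * x' j) := by
        intro j _
        unfold zF yF d'N
        rcases sN_cases i with h | h <;> rw [h] <;> ring
      rw [Finset.sum_congr rfl h2, ← Finset.mul_sum, h0, mul_zero]
    rw [Finset.sum_add_distrib, ← Finset.mul_sum, sumC m i hi (yF x'),
      sumC' m i hm hi (zF m x')] at h1
    rw [← hSydef, ← hSzdef] at h1
    have hp2 : yF x' (2*(i/2)) + yF x' (2*(i/2)+1) = pF x' (i/2) := rfl
    have hQ : (if bN m i = 0 then zF m x' 0 + zF m x' (2*m-1)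
        else zF m x' (2*(bN m i)-1) + zF m x' (2*(bN m i)))
        = (wN m i : ℝ) * uF m x' (wN m i) := by
      by_cases hb : bN m i = 0
      · rw [if_pos hb, wN_of_bN_zero hm hi hb]
        unfold zF uF
        rw [if_pos rfl, wN_zero, wN_last]
        ring
      · obtain ⟨hb1, hb2⟩ := bN_range hm hi hb
        rw [if_neg hb, wN_of_bN_ne hm hi hb]
        unfold zF uF
        rw [if_neg (by omega), wN_oddk hm hb1 hb2, wN_evenk hm hb1 hb2]
        ring
    rw [hp2, hQ] at h1
    linarith
  -- all C-block sums are equal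
  have hpp : ∀ k, 1 ≤ k → k ≤ m-1 → pF x' (k-1) = pF x' k := by
    intro k h1 h2
    have e1 := hE (2*k-1) (by omega)
    have e2 := hE (2*k) (by omega)
    rw [show (2*k-1)/2 = k-1 from by omega,
      show (2*k-1) = 2*k-1 from rfl, wN_oddk hm h1 h2] at e1
    rw [show (2*k)/2 = k from by omega, wN_evenk hm h1 h2] at e2
    linarith
  have hp : ∀ k, k ≤ m-1 → pF x' k = pF x' 0 := by
    intro k
    induction k with
    | zero => intro _; rfl
    | succ n ih =>
      intro h
      rw [← hpp (n+1) (by omega) h]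
      exact ih (by omega)
  have hSy : Sy = (m:ℝ) * pF x' 0 := by
    rw [hSydef, sum_pair (yF x') m]
    have hcong : ∀ k ∈ range m, (yF x' (2*k) + yF x' (2*k+1)) = pF x' 0 := by
      intro k hk
      exact hp k (by have := Finset.mem_range.mp hk; omega)
    rw [Finset.sum_congr rfl hcong, Finset.sum_const, Finset.card_range, nsmul_eq_mul]
  have hu : ∀ k, 1 ≤ k → k ≤ m →
      (k:ℝ) * (2*((k:ℝ) * uF m x' k) - Sz) = ((m:ℝ) - 2) * pF x' 0 := by
    intro k h1 h2
    by_cases hk : k ≤ m-1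
    · have e2 := hE (2*k) (by omega)
      rw [show (2*k)/2 = k from by omega, wN_evenk hm h1 hk, hp k hk, hSy] at e2
      linarith
    · have hk2 : k = m := by omega
      subst hk2
      have e0 := hE 0 (by omega)
      rw [show (0:ℕ)/2 = 0 from rfl, wN_zero, hSy] at e0
      linarith
  have hu2 : ∀ k, 1 ≤ k → k ≤ m →
      uF m x' k = ((k:ℝ) * Sz + ((m:ℝ)-2) * pF x' 0) / (2*(k:ℝ)^2) := by
    intro k h1 h2
    have hk0 : (0:ℝ) < (k:ℝ) := by exact_mod_cast h1
    rw [eq_div_iff (by positivity)]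
    linear_combination hu k h1 h2
  have hSyu : Sy = (∑ k ∈ range (m-1), uF m x' (k+1)) + uF m x' m := by
    rw [hSydef, sum_shift (yF x') m (by omega)]
    have h1 : ∀ k ∈ range (m-1), yF x' (2*k+1) + yF x' (2*k+2) = uF m x' (k+1) := by
      intro k hk
      unfold uF
      rw [if_neg (by have := Finset.mem_range.mp hk; omega),
        show 2*(k+1)-1 = 2*k+1 from by omega, show 2*(k+1) = 2*k+2 from by omega]
    rw [Finset.sum_congr rfl h1]
    unfold uF
    rw [if_pos rfl]
    ring
  have hSzu : Sz = (∑ k ∈ range (m-1), ((k:ℝ)+1) * uF m x' (k+1)) + (m:ℝ) * uF m x' m := by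
    rw [hSzdef, sum_shift (zF m x') m (by omega)]
    have h1 : ∀ k ∈ range (m-1), zF m x' (2*k+1) + zF m x' (2*k+2)
        = ((k:ℝ)+1) * uF m x' (k+1) := by
      intro k hk
      have hk' := Finset.mem_range.mp hk
      have w1 : wN m (2*k+1) = k+1 := by
        rw [show 2*k+1 = 2*(k+1)-1 from by omega]; exact wN_oddk hm (by omega) (by omega)
      have w2 : wN m (2*k+2) = k+1 := by
        rw [show 2*k+2 = 2*(k+1) from by omega]; exact wN_evenk hm (by omega) (by omega)
      unfold zF uF
      rw [w1, w2, if_neg (by omega), show 2*(k+1)-1 = 2*k+1 from by omega,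
        show 2*(k+1) = 2*k+2 from by omega]
      push_cast
      ring
    rw [Finset.sum_congr rfl h1]
    unfold zF uF
    rw [if_pos rfl, wN_zero, wN_last]
    push_cast
    ring
  have hcastm1 : ((m-1 : ℕ):ℝ) = (m:ℝ) - 1 := by
    rw [Nat.cast_sub (by omega)]; norm_num
  -- first harmonic identity : Sz = -p0 * H
  have hSz : Sz = -(pF x' 0) * Hm m := by
    have h1 : ∀ k ∈ range (m-1), ((k:ℝ)+1) * uF m x' (k+1)
        = Sz/2 + (((m:ℝ)-2) * pF x' 0 / 2) * (1/((k:ℝ)+1)) := by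
      intro k hk
      rw [hu2 (k+1) (by omega) (by have := Finset.mem_range.mp hk; omega)]
      have hk1 : (0:ℝ) < (k:ℝ)+1 := by positivity
      push_cast
      field_simp
    have h2 : (m:ℝ) * uF m x' m = Sz/2 + (((m:ℝ)-2) * pF x' 0 / 2) * (1/(m:ℝ)) := by
      rw [hu2 m (by omega) le_rfl]
      field_simp
    rw [h2, Finset.sum_congr rfl h1, Finset.sum_add_distrib, Finset.sum_const,
      Finset.card_range, ← Finset.mul_sum, nsmul_eq_mul, hcastm1] at hSzu
    have key : Sz = (m:ℝ)*Sz/2 + (((m:ℝ)-2) * pF x' 0 / 2) * Hm m := by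
      rw [Hm_split m (by omega)]
      linarith [hSzu]
    have h5 : ((m:ℝ)-2) * (Sz + pF x' 0 * Hm m) = 0 := by
      linear_combination (-2 : ℝ) * key
    rcases mul_eq_zero.mp h5 with h | h
    · exfalso; linarith
    · linarith
  -- second harmonic identity
  have hfin : (m:ℝ) * pF x' 0
      = Sz/2 * Hm m + (((m:ℝ)-2) * pF x' 0 / 2) * H2m m := by
    have h1 : ∀ k ∈ range (m-1), uF m x' (k+1)
        = Sz/2 * (1/((k:ℝ)+1)) + (((m:ℝ)-2) * pF x' 0 / 2) * (1/((k:ℝ)+1)^2) := by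
      intro k hk
      rw [hu2 (k+1) (by omega) (by have := Finset.mem_range.mp hk; omega)]
      have hk1 : (0:ℝ) < (k:ℝ)+1 := by positivity
      push_cast
      field_simp
    have h2 : uF m x' m = Sz/2 * (1/(m:ℝ)) + (((m:ℝ)-2) * pF x' 0 / 2) * (1/(m:ℝ)^2) := by
      rw [hu2 m (by omega) le_rfl]
      field_simp
    rw [h2, Finset.sum_congr rfl h1, Finset.sum_add_distrib, ← Finset.mul_sum,
      ← Finset.mul_sum, hSy] at hSyu
    rw [Hm_split m (by omega), H2m_split m (by omega)]
    linarith [hSyu]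
  have hp0 : pF x' 0 = 0 := by
    have hb := H2m_le m (by omega)
    have hb0 := H2m_nonneg m
    have h1 : ((m:ℝ)-2) * H2m m ≤ ((m:ℝ)-2) * (2 - 1/(m:ℝ)) :=
      mul_le_mul_of_nonneg_left hb (by linarith)
    have h2 : (m:ℝ) * (1/(m:ℝ)) = 1 := by field_simp
    have h3 : 0 ≤ ((m:ℝ)-2) * (1/(m:ℝ)) :=
      mul_nonneg (by linarith) (by positivity)
    have hcoef : 0 < 2*(m:ℝ) + (Hm m)^2 - ((m:ℝ)-2) * H2m m := by
      nlinarith [sq_nonneg (Hm m)]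
    have heq : pF x' 0 * (2*(m:ℝ) + (Hm m)^2 - ((m:ℝ)-2) * H2m m) = 0 := by
      rw [hSz] at hfin
      linear_combination (2 : ℝ) * hfin
    rcases mul_eq_zero.mp heq with h | h
    · exact h
    · exfalso; linarith
  have hSz0 : Sz = 0 := by rw [hSz, hp0]; ring
  have hpk0 : ∀ k, k ≤ m-1 → pF x' k = 0 := fun k hk => (hp k hk).trans hp0
  have huk0 : ∀ k, 1 ≤ k → k ≤ m → uF m x' k = 0 := by
    intro k h1 h2
    rw [hu2 k h1 h2, hSz0, hp0]
    simp
  have hadj : ∀ j, j+1 < 2*m → x' (j+1) = x' j := by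
    intro j hj
    rcases Nat.even_or_odd j with he | ho
    · have hj2 : j % 2 = 0 := Nat.even_iff.mp he
      obtain ⟨k, rfl⟩ : ∃ k, j = 2*k := ⟨j/2, by omega⟩
      have hk := hpk0 k (by omega)
      unfold pF yF at hk
      rw [sN_even (j := 2*k) (by omega), sN_odd (j := 2*k+1) (by omega)] at hk
      linarith
    · have hj2 : j % 2 = 1 := Nat.odd_iff.mp ho
      obtain ⟨k, rfl⟩ : ∃ k, j = 2*k+1 := ⟨j/2, by omega⟩
      have hk := huk0 (k+1) (by omega) (by omega)
      unfold uF yF at hk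
      rw [if_neg (by omega), show 2*(k+1)-1 = 2*k+1 from by omega] at hk
      rw [sN_odd (j := 2*k+1) (by omega), sN_even (j := 2*(k+1)) (by omega)] at hk
      rw [show 2*k+1+1 = 2*(k+1) from by omega]
      linarith
  intro j
  induction j with
  | zero => intro _; rfl
  | succ n ih =>
    intro h
    rw [hadj n h, ih (by omega)]

end Stmt11Aux

theorem stmt11 (m : ℕ) (hm : 3 ≤ m) :
    ∃ d d' : Fin (2 * m) → ℝ,
      (∀ i, d i ≠ 0) ∧ (∀ i, d' i ≠ 0) ∧
      -- d_{2k} = -d_{2k-1} (1-indexed): consecutive pairs starting at even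
      -- 0-indexed positions
      (∀ i j : Fin (2 * m), (i : ℕ) % 2 = 0 → (j : ℕ) = (i : ℕ) + 1 →
        d j = -d i) ∧
      -- d'_{2k+1} = -d'_{2k} (1-indexed): consecutive pairs starting at odd
      -- 0-indexed positions, together with d'₁ = -d'_{2m}
      (∀ i j : Fin (2 * m), (i : ℕ) % 2 = 1 → (j : ℕ) = (i : ℕ) + 1 →
        d' j = -d' i) ∧
      (∀ i j : Fin (2 * m), (i : ℕ) = 0 → (j : ℕ) = 2 * m - 1 →
        d' i = -d' j) ∧
      ∀ A B : Matrix (Fin (2 * m)) (Fin (2 * m)) ℝ,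
        A = Matrix.diagonal d * Cmat m * Matrix.diagonal d →
        B = Matrix.diagonal d' * Cmat' m * Matrix.diagonal d' →
        A.mulVec 1 = 0 ∧ B.mulVec 1 = 0 ∧
        (∀ i j : Fin (2 * m), i < j → A i i * A j j - A i j ^ 2 = 0) ∧
        (∀ i j : Fin (2 * m), i < j → B i i * B j j - B i j ^ 2 = 0) ∧
        (A + B).rank = 2 * m - 1 ∧
        (∀ i j : Fin (2 * m), i < j →
          0 < (A + B) i i * (A + B) j j - (A + B) i j ^ 2) := by
  refine ⟨fun i => sN i, fun i => d'N m i, ?_, ?_, ?_, ?_, ?_, ?_⟩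
  · intro i; exact sN_ne i
  · intro i
    unfold d'N
    have h1 : (wN m (i:ℕ) : ℝ) ≠ 0 := by
      have := wN_pos (m := m) (j := (i:ℕ)) hm
      positivity
    exact mul_ne_zero (by simpa using sN_ne (i:ℕ)) h1
  · intro i j hi hj
    show sN (j:ℕ) = -(sN (i:ℕ))
    rw [hj, sN_odd (by omega), sN_even hi]
  · intro i j hi hj
    show -(sN (j:ℕ)) * (wN m (j:ℕ) : ℝ) = -(-(sN (i:ℕ)) * (wN m (i:ℕ) : ℝ))
    have hj2 : (j:ℕ) < 2*m := j.isLt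
    have hw : wN m ((i:ℕ)+1) = wN m (i:ℕ) := by
      unfold wN
      rw [if_neg (by omega), if_neg (by omega)]
      omega
    rw [hj, hw, sN_even (by omega), sN_odd hi]
    ring
  · intro i j hi hj
    show -(sN (i:ℕ)) * (wN m (i:ℕ) : ℝ) = -(-(sN (j:ℕ)) * (wN m (j:ℕ) : ℝ))
    rw [hi, hj, wN_zero, wN_last, sN_even (by omega), sN_odd (by omega)]
    ring
  · intro A B hA hB
    have hAe : ∀ i j : Fin (2*m),
        A i j = sN (i:ℕ) * (if (i:ℕ)/2 = (j:ℕ)/2 then (1:ℝ) else -1) * sN (j:ℕ) := by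
      intro i j
      rw [hA, Matrix.mul_diagonal, Matrix.diagonal_mul]
      rfl
    have hBe : ∀ i j : Fin (2*m),
        B i j = d'N m (i:ℕ) * (if bN m (i:ℕ) = bN m (j:ℕ) then (1:ℝ) else -1) * d'N m (j:ℕ) := by
      intro i j
      rw [hB, Matrix.mul_diagonal, Matrix.diagonal_mul, Cmat'_eq]
    -- row sums
    have hArow : ∀ i : Fin (2*m), ∑ j : Fin (2*m), A i j = 0 := by
      intro i
      have h1 : ∀ j : Fin (2*m), A i j
          = (fun jn => sN (i:ℕ) * ((if (i:ℕ)/2 = jn/2 then (1:ℝ) else -1) * sN jn)) (j:ℕ) := by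
        intro j; rw [hAe]; ring
      rw [Finset.sum_congr rfl (fun j _ => h1 j),
        Fin.sum_univ_eq_sum_range (fun jn => sN (i:ℕ) * ((if (i:ℕ)/2 = jn/2 then (1:ℝ) else -1) * sN jn)) (2*m),
        ← Finset.mul_sum, sumC m (i:ℕ) i.isLt sN]
      rw [sN_even (j := 2*((i:ℕ)/2)) (by omega), sN_odd (j := 2*((i:ℕ)/2)+1) (by omega),
        sum_sN]
      ring
    have hBrow : ∀ i : Fin (2*m), ∑ j : Fin (2*m), B i j = 0 := by
      intro i
      have h1 : ∀ j : Fin (2*m), B i j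
          = (fun jn => d'N m (i:ℕ) * ((if bN m (i:ℕ) = bN m jn then (1:ℝ) else -1) * d'N m jn)) (j:ℕ) := by
        intro j; rw [hBe]; ring
      rw [Finset.sum_congr rfl (fun j _ => h1 j),
        Fin.sum_univ_eq_sum_range (fun jn => d'N m (i:ℕ) * ((if bN m (i:ℕ) = bN m jn then (1:ℝ) else -1) * d'N m jn)) (2*m),
        ← Finset.mul_sum, sumC' m (i:ℕ) hm i.isLt (d'N m)]
      rw [sum_d'N hm]
      by_cases hb : bN m (i:ℕ) = 0
      · rw [if_pos hb, d'N_pair_last hm]; ring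
      · obtain ⟨hb1, hb2⟩ := bN_range hm i.isLt hb
        rw [if_neg hb]
        have := d'N_pair (k := bN m (i:ℕ) - 1) hm (by omega)
        rw [show 2*(bN m (i:ℕ) - 1)+1 = 2*(bN m (i:ℕ))-1 from by omega,
          show 2*(bN m (i:ℕ) - 1)+2 = 2*(bN m (i:ℕ)) from by omega] at this
        rw [this]; ring
    have hA1 : A.mulVec 1 = 0 := by
      funext i
      simp only [Matrix.mulVec, dotProduct, Pi.one_apply, mul_one, Pi.zero_apply]
      exact hArow i
    have hB1 : B.mulVec 1 = 0 := by
      funext i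
      simp only [Matrix.mulVec, dotProduct, Pi.one_apply, mul_one, Pi.zero_apply]
      exact hBrow i
    refine ⟨hA1, hB1, ?_, ?_, ?_, ?_⟩
    · intro i j _
      rw [hAe i i, hAe j j, hAe i j]
      simp only [eq_self_iff_true, if_true]
      rcases sN_cases (i:ℕ) with h1 | h1 <;> rcases sN_cases (j:ℕ) with h2 | h2 <;>
        rw [h1, h2] <;> split <;> ring
    · intro i j _
      rw [hBe i i, hBe j j, hBe i j]
      unfold d'N
      simp only [eq_self_iff_true, if_true]
      rcases sN_cases (i:ℕ) with h1 | h1 <;> rcases sN_cases (j:ℕ) with h2 | h2 <;>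
        rw [h1, h2] <;> split <;> ring
    · -- rank
      have hone : (1 : Fin (2*m) → ℝ) ≠ 0 := by
        intro h
        have h0 := congrFun h ⟨0, by omega⟩
        norm_num at h0
      have hAB1 : (A + B).mulVec 1 = 0 := by
        rw [Matrix.add_mulVec, hA1, hB1]; simp
      have hker : LinearMap.ker (A + B).mulVecLin
          = Submodule.span ℝ {(1 : Fin (2*m) → ℝ)} := by
        apply le_antisymm
        · intro x hxk
          rw [LinearMap.mem_ker, Matrix.mulVecLin_apply] at hxk
          set x' : ℕ → ℝ := fun n => if h : n < 2*m then x ⟨n, h⟩ else 0 with hx'def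
          have hx'j : ∀ j : Fin (2*m), x j = x' (j:ℕ) := by
            intro j
            rw [hx'def]
            simp [j.isLt]
          have hrow : ∀ i, i < 2*m → ∑ j ∈ Finset.range (2*m),
              (sN i * (if i/2 = j/2 then (1:ℝ) else -1) * sN j
                + d'N m i * (if bN m i = bN m j then (1:ℝ) else -1) * d'N m j) * x' j = 0 := by
            intro i hi
            have h0 := congrFun hxk ⟨i, hi⟩
            simp only [Matrix.mulVec, dotProduct, Pi.zero_apply] at h0
            calc ∑ j ∈ Finset.range (2*m),
                  (fun jn => (sN i * (if i/2 = jn/2 then (1:ℝ) else -1) * sN jn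
                    + d'N m i * (if bN m i = bN m jn then (1:ℝ) else -1) * d'N m jn) * x' jn) j
                = ∑ j : Fin (2*m),
                  (fun jn => (sN i * (if i/2 = jn/2 then (1:ℝ) else -1) * sN jn
                    + d'N m i * (if bN m i = bN m jn then (1:ℝ) else -1) * d'N m jn) * x' jn) (j:ℕ) :=
                  (Fin.sum_univ_eq_sum_range _ (2*m)).symm
              _ = ∑ j : Fin (2*m), (A + B) ⟨i, hi⟩ j * x j := by
                  apply Finset.sum_congr rfl
                  intro j _
                  rw [Matrix.add_apply, hAe, hBe, hx'j j]
              _ = 0 := h0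
          have hconst := ker_const m hm x' hrow
          rw [Submodule.mem_span_singleton]
          refine ⟨x' 0, ?_⟩
          funext i
          rw [Pi.smul_apply, Pi.one_apply, smul_eq_mul, mul_one, hx'j i,
            hconst (i:ℕ) i.isLt]
        · rw [Submodule.span_le, Set.singleton_subset_iff, SetLike.mem_coe,
            LinearMap.mem_ker, Matrix.mulVecLin_apply]
          exact hAB1
      have hrn := LinearMap.finrank_range_add_finrank_ker (A + B).mulVecLin
      rw [hker, finrank_span_singleton hone, Module.finrank_fin_fun] at hrn
      unfold Matrix.rank
      omega
    · -- positive minors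
      intro i j hij
      have hij' : (i:ℕ) ≠ (j:ℕ) := fun h => absurd (Fin.ext h) (ne_of_lt hij)
      simp only [Matrix.add_apply]
      rw [hAe i i, hAe j j, hAe i j, hBe i i, hBe j j, hBe i j]
      simp only [eq_self_iff_true, if_true]
      unfold d'N
      have hwi : (1:ℝ) ≤ (wN m (i:ℕ) : ℝ) := by exact_mod_cast wN_pos hm
      have hwj : (1:ℝ) ≤ (wN m (j:ℕ) : ℝ) := by exact_mod_cast wN_pos hm
      by_cases hb : bN m (i:ℕ) = bN m (j:ℕ)
      · rw [if_pos hb, if_neg (blk_same_C hm i.isLt j.isLt hij' hb)]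
        have hw := blk_same_w hm i.isLt j.isLt hb
        rw [hw]
        rcases sN_cases (i:ℕ) with h1 | h1 <;> rcases sN_cases (j:ℕ) with h2 | h2 <;>
          rw [h1, h2] <;> nlinarith [hwj]
      · rw [if_neg hb]
        have hw : (wN m (i:ℕ) : ℝ) ≠ (wN m (j:ℕ) : ℝ) := by
          exact_mod_cast blk_diff_w hm i.isLt j.isLt hb
        have hw2 : 0 < ((wN m (i:ℕ) : ℝ) - (wN m (j:ℕ) : ℝ))^2 := by
          have h3 : (wN m (i:ℕ) : ℝ) - (wN m (j:ℕ) : ℝ) ≠ 0 := sub_ne_zero_of_ne hw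
          positivity
        rcases sN_cases (i:ℕ) with h1 | h1 <;> rcases sN_cases (j:ℕ) with h2 | h2 <;>
          rw [h1, h2] <;> split <;> nlinarith [hw2, hwi, hwj]
end

section
/- Let a₁, a₂, a₃ be nonzero reals with a₁ + a₂ + a₃ = 0, and let A be the 3×3 matrix [[a₁², −a₁a₂, −a₁a₃],[−a₁a₂, a₂², −a₂a₃],[−a₁a₃, −a₂a₃, a₃²]] (the Gram matrix of a pseudo 3-simplex whose opposite edges have equal squared lengths a₁², a₂², a₃²). Then: (1) every 2×2 principal minor of A vanishes; (2) the Gram determinant of the remaining 2-face also vanishes, i.e. det [[a₃², −a₂a₃],[−a₂a₃, a₂²]] = 0, so all four 2-faces of the pseudo 3-simplex have zero area; and (3) det(A) = −4a₁²a₂²a₃² ≠ 0, so the pseudo 3-simplex has nonzero volume. -/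
theorem stmt14 (a₁ a₂ a₃ : ℝ)
    (h₁ : a₁ ≠ 0) (h₂ : a₂ ≠ 0) (h₃ : a₃ ≠ 0) (hsum : a₁ + a₂ + a₃ = 0)
    (A : Matrix (Fin 3) (Fin 3) ℝ)
    (hA : A = !![a₁ ^ 2, -(a₁ * a₂), -(a₁ * a₃);
                 -(a₁ * a₂), a₂ ^ 2, -(a₂ * a₃);
                 -(a₁ * a₃), -(a₂ * a₃), a₃ ^ 2]) :
    -- (1) every 2×2 principal minor of A vanishes
    (∀ i j : Fin 3, i < j → A i i * A j j - A i j * A j i = 0) ∧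
    -- (2) the Gram determinant of the remaining 2-face also vanishes
    (!![a₃ ^ 2, -(a₂ * a₃); -(a₂ * a₃), a₂ ^ 2] : Matrix (Fin 2) (Fin 2) ℝ).det
      = 0 ∧
    -- (3) det(A) = −4a₁²a₂²a₃² ≠ 0
    A.det = -4 * a₁ ^ 2 * a₂ ^ 2 * a₃ ^ 2 ∧ A.det ≠ 0 := by
  subst hA
  have h3 : a₃ = -(a₁ + a₂) := by linarith
  have hdet : (!![a₁ ^ 2, -(a₁ * a₂), -(a₁ * a₃);
                 -(a₁ * a₂), a₂ ^ 2, -(a₂ * a₃);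
                 -(a₁ * a₃), -(a₂ * a₃), a₃ ^ 2] : Matrix (Fin 3) (Fin 3) ℝ).det
      = -4 * a₁ ^ 2 * a₂ ^ 2 * a₃ ^ 2 := by
    rw [Matrix.det_fin_three]
    subst h3
    simp [Matrix.cons_val_zero, Matrix.cons_val_one]
    ring
  refine ⟨?_, ?_, hdet, ?_⟩
  · intro i j hij
    fin_cases i <;> fin_cases j <;> simp_all <;> ring
  · rw [Matrix.det_fin_two]; simp; ring
  · rw [hdet]
    have : a₁ ^ 2 * a₂ ^ 2 * a₃ ^ 2 > 0 := by positivity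
    nlinarith
end

section
/- Let m ≥ 1 and let A and B be 2m×2m real matrices with rank(A) ≤ m and rank(B) ≤ m. Then the function t ↦ det(tA + (1/t)B) is constant on ℝ \ {0}; in particular, for all nonzero s and t, det(tA + (1/t)B) = det(sA + (1/s)B). -/
/-!
Expanding `det (a • A + b • B)` multilinearly in the rows gives a sum over the sets `S` of rows
taken from `A`, with coefficient `a ^ #S * b ^ #Sᶜ`. A term with `#S > rank A` (or
`#Sᶜ > rank B`) has more rows in the row space of `A` (of `B`) than its dimension, so it
vanishes. When both ranks are at most `m = n / 2`, only `#S = #Sᶜ = m` survives, and for `a = t`,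
`b = t⁻¹` its coefficient is `1`.
-/

open Matrix Finset

variable {n : Type*} [Fintype n] [DecidableEq n]

lemma Matrix.det_eq_zero_of_rows_eq_of_rank_lt {K : Type*} [Field K] {M C : Matrix n n K}
    (T : Finset n) (hrows : ∀ i ∈ T, M i = C i) (hrank : C.rank < #T) : M.det = 0 := by
  by_contra hdet
  have hli : LinearIndependent K (fun i : T => M i) :=
    (linearIndependent_rows_of_det_ne_zero hdet).comp _ Subtype.val_injective
  have hspan : Submodule.span K (Set.range fun i : T => M i) ≤
      Submodule.span K (Set.range C.row) :=
    Submodule.span_mono (by rintro _ ⟨i, rfl⟩; exact ⟨i, (hrows i i.2).symm⟩)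
  have hle := Submodule.finrank_mono hspan
  rw [finrank_span_eq_card hli, ← rank_eq_finrank_span_row, Fintype.card_coe] at hle
  omega

lemma Matrix.det_smul_add_smul {R : Type*} [CommRing R] (a b : R) (A B : Matrix n n R) :
    (a • A + b • B).det = ∑ S : Finset n, a ^ #S * b ^ #Sᶜ * det (S.piecewise A B) := by
  change detRowAlternating ((fun i => a • A i) + (fun i => b • B i)) = _
  rw [AlternatingMap.map_add_univ]
  refine sum_congr rfl fun S _ => ?_
  have hsmul : S.piecewise (fun i => a • A i) (fun i => b • B i) =
      fun i => S.piecewise (fun _ => a) (fun _ => b) i • S.piecewise A B i := by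
    funext i
    by_cases hi : i ∈ S <;> simp [Finset.piecewise, hi]
  rw [hsmul, AlternatingMap.map_smul_univ, prod_piecewise, univ_inter, ← compl_eq_univ_sdiff,
    prod_const, prod_const]
  rfl

lemma Matrix.det_smul_add_smul_of_rank_le {K : Type*} [Field K] {A B : Matrix n n K} {p q : ℕ}
    (hA : A.rank ≤ p) (hB : B.rank ≤ q) (hpq : p + q = Fintype.card n) (a b : K) :
    (a • A + b • B).det = a ^ p * b ^ q * ∑ S ∈ univ.powersetCard p, det (S.piecewise A B) := by
  rw [det_smul_add_smul, mul_sum, ← sum_subset (subset_univ _)]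
  · refine sum_congr rfl fun S hS => ?_
    have hS : #S = p := mem_powersetCard_univ.mp hS
    rw [card_compl, hS, show Fintype.card n - p = q by omega, mul_assoc]
  · intro S _ hS
    have hS : #S ≠ p := fun h => hS (mem_powersetCard_univ.mpr h)
    have hSc : #Sᶜ = Fintype.card n - #S := card_compl S
    have hdet : det (S.piecewise A B) = 0 := by
      rcases lt_or_gt_of_ne hS with hlt | hgt
      · exact det_eq_zero_of_rows_eq_of_rank_lt Sᶜ
          (fun i hi => S.piecewise_eq_of_notMem _ _ (mem_compl.mp hi)) (by omega)
      · exact det_eq_zero_of_rows_eq_of_rank_lt S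
          (fun i hi => S.piecewise_eq_of_mem _ _ hi) (by omega)
    rw [hdet, mul_zero]

theorem stmt16_general (m : ℕ)
    (A B : Matrix (Fin (2 * m)) (Fin (2 * m)) ℝ)
    (hA : A.rank ≤ m) (hB : B.rank ≤ m) :
    ∀ s t : ℝ, s ≠ 0 → t ≠ 0 →
      (t • A + t⁻¹ • B).det = (s • A + s⁻¹ • B).det := by
  intro s t hs ht
  have hcard : m + m = Fintype.card (Fin (2 * m)) := by rw [Fintype.card_fin]; ring
  rw [det_smul_add_smul_of_rank_le hA hB hcard, det_smul_add_smul_of_rank_le hA hB hcard,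
    ← mul_pow, ← mul_pow, mul_inv_cancel₀ hs, mul_inv_cancel₀ ht]

theorem stmt16 (m : ℕ) (hm : 1 ≤ m)
    (A B : Matrix (Fin (2 * m)) (Fin (2 * m)) ℝ)
    (hA : A.rank ≤ m) (hB : B.rank ≤ m) :
    ∀ s t : ℝ, s ≠ 0 → t ≠ 0 →
      (t • A + t⁻¹ • B).det = (s • A + s⁻¹ • B).det :=
  stmt16_general m A B hA hB
end

section
/- Let m ≥ 3, let C be the 2m×2m real matrix whose (i,j) entry is 1 if ⌈i/2⌉ = ⌈j/2⌉ and −1 otherwise, and let C' be the matrix obtained from C by moving its last row and last column to the first row and first column. Let d, d' ∈ ℝ^{2m} have all entries nonzero with d_{2k} = −d_{2k−1} for 1 ≤ k ≤ m, d'_{2k+1} = −d'_{2k} for 1 ≤ k ≤ m−1, and d'₁ = −d'_{2m}, and set A = diag(d)·C·diag(d) and B = diag(d')·C'·diag(d'). Then the kernel of A is {x ∈ ℝ^{2m} : x_{2k−1} = x_{2k} for 1 ≤ k ≤ m}, the kernel of B is {x ∈ ℝ^{2m} : x_{2k} = x_{2k+1} for 1 ≤ k ≤ m−1 and x_{2m}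 = x₁}, and the intersection ker(A) ∩ ker(B) is exactly the one-dimensional span of the all-ones vector 𝟏. -/
set_option linter.unreachableTactic false
set_option linter.unusedTactic false

lemma mycore (m : ℕ) (hm : 3 ≤ m) (p : Fin (2*m) → Fin (2*m))
    (hpne : ∀ i, p i ≠ i)
    (hinv : Function.Involutive p)
    (C : Matrix (Fin (2*m)) (Fin (2*m)) ℝ)
    (hC : ∀ i j, C i j = if j = i ∨ j = p i then 1 else -1)
    (d : Fin (2*m) → ℝ) (hd : ∀ i, d i ≠ 0) (hdp : ∀ i, d (p i) = -d i)
    (x : Fin (2*m) → ℝ) :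
    (Matrix.diagonal d * C * Matrix.diagonal d).mulVec x = 0 ↔ ∀ i, x i = x (p i) := by
  set y : Fin (2*m) → ℝ := fun j => d j * x j with hy
  set S : ℝ := ∑ j, y j with hS
  have hsump : ∑ i, y (p i) = S := by
    rw [hS]
    exact Equiv.sum_comp hinv.toPerm y
  have hrow : ∀ i, (Matrix.diagonal d * C * Matrix.diagonal d).mulVec x i
      = d i * (2 * (y i + y (p i)) - S) := by
    intro i
    have h1 : (Matrix.diagonal d * C * Matrix.diagonal d).mulVec x i
        = ∑ j, d i * (C i j * y j) := by
      simp only [Matrix.mulVec, dotProduct, Matrix.mul_diagonal, Matrix.diagonal_mul, hy]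
      exact Finset.sum_congr rfl fun j _ => by ring
    rw [h1, ← Finset.mul_sum]
    congr 1
    have h2 : ∀ j : Fin (2*m), C i j * y j
        = ((if j = i then (2:ℝ)*y j else 0) + (if j = p i then 2*y j else 0)) - y j := by
      intro j
      rw [hC]
      by_cases e1 : j = i
      · subst e1
        rw [if_pos (Or.inl rfl), if_pos rfl, if_neg (fun h => hpne j h.symm)]
        ring
      · by_cases e2 : j = p i
        · rw [if_pos (Or.inr e2), if_neg e1, if_pos e2]; ring
        · rw [if_neg (by tauto), if_neg e1, if_neg e2]; ring
    rw [Finset.sum_congr rfl fun j _ => h2 j, Finset.sum_sub_distrib, Finset.sum_add_distrib,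
      Finset.sum_ite_eq' Finset.univ i (fun j => (2:ℝ)*y j),
      Finset.sum_ite_eq' Finset.univ (p i) (fun j => (2:ℝ)*y j)]
    simp only [Finset.mem_univ, if_pos, ← hS]
    ring
  constructor
  · intro h0
    have hr : ∀ i, 2*(y i + y (p i)) = S := by
      intro i
      have h := congrFun h0 i
      rw [hrow i, Pi.zero_apply] at h
      rcases mul_eq_zero.mp h with h | h
      · exact absurd h (hd i)
      · linarith
    have hS0 : S = 0 := by
      have h3 : ∑ i : Fin (2*m), (2*(y i + y (p i))) = ∑ _i : Fin (2*m), S :=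
        Finset.sum_congr rfl fun i _ => hr i
      rw [Finset.sum_const, Finset.card_univ, Fintype.card_fin, nsmul_eq_mul] at h3
      have h4 : ∑ i : Fin (2*m), (2*(y i + y (p i))) = 4 * S := by
        rw [Finset.sum_congr rfl fun i (_: i ∈ Finset.univ) => (by ring :
          2*(y i + y (p i)) = 2 * y i + 2 * y (p i)), Finset.sum_add_distrib,
          ← Finset.mul_sum, ← Finset.mul_sum, hsump, ← hS]
        ring
      rw [h4] at h3
      have hm6 : (6:ℝ) ≤ (2*m : ℕ) := by exact_mod_cast Nat.le_of_lt_succ (by omega)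
      have : ((2*m : ℕ) - 4 : ℝ) * S = 0 := by linarith
      rcases mul_eq_zero.mp this with h | h
      · linarith
      · exact h
    intro i
    have h5 := hr i
    rw [hS0] at h5
    have h6 : d i * (x i - x (p i)) = 0 := by
      have : y i + y (p i) = 0 := by linarith
      rw [hy] at this
      simp only at this
      rw [hdp i] at this
      linarith
    rcases mul_eq_zero.mp h6 with h | h
    · exact absurd h (hd i)
    · linarith
  · intro hx
    have hpair : ∀ i, y i + y (p i) = 0 := by
      intro i
      rw [hy]
      simp only
      rw [hdp i, ← hx i]
      ring
    have hS0 : S = 0 := by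
      have h2 : S + S = ∑ i, (y i + y (p i)) := by
        rw [Finset.sum_add_distrib, hsump, ← hS]
      simp only [hpair, Finset.sum_const_zero] at h2
      linarith
    funext i
    rw [hrow i, hpair i, hS0, Pi.zero_apply]
    ring

def pA (m : ℕ) : Fin (2*m) → Fin (2*m) := fun i =>
  ⟨if (i:ℕ) % 2 = 0 then (i:ℕ)+1 else (i:ℕ)-1, by
    have := i.isLt; split_ifs <;> omega⟩

lemma pA_val (m : ℕ) (i : Fin (2*m)) :
    (pA m i : ℕ) = if (i:ℕ) % 2 = 0 then (i:ℕ)+1 else (i:ℕ)-1 := rfl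

def pB (m : ℕ) : Fin (2*m) → Fin (2*m)  := fun i =>
  ⟨if (i:ℕ) = 0 then 2*m-1 else if (i:ℕ) = 2*m-1 then 0
    else if (i:ℕ) % 2 = 1 then (i:ℕ)+1 else (i:ℕ)-1, by
    have := i.isLt; split_ifs <;> omega⟩

lemma pB_val (m : ℕ) (i : Fin (2*m)) :
    (pB m i : ℕ) = if (i:ℕ) = 0 then 2*m-1 else if (i:ℕ) = 2*m-1 then 0
      else if (i:ℕ) % 2 = 1 then (i:ℕ)+1 else (i:ℕ)-1 := rfl

lemma pA_ne (m : ℕ) (i : Fin (2*m)) : pA m i ≠ i := by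
  intro h
  have h2 := congrArg Fin.val h
  rw [pA_val] at h2
  have := i.isLt
  split_ifs at h2 <;> omega

lemma pA_inv (m : ℕ) : Function.Involutive (pA m) := by
  intro i
  apply Fin.ext
  rw [pA_val, pA_val]
  have := i.isLt
  split_ifs <;> first | omega | exact False.elim ‹False›

lemma pB_ne (m : ℕ) (i : Fin (2*m)) : pB m i ≠ i := by
  intro h
  have h2 := congrArg Fin.val h
  rw [pB_val] at h2
  have := i.isLt
  split_ifs at h2 <;> omega

lemma pB_inv (m : ℕ) : Function.Involutive (pB m) := by
  intro i
  apply Fin.ext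
  rw [pB_val, pB_val]
  have := i.isLt
  split_ifs <;> first | omega | exact False.elim ‹False›

lemma CmatA (m : ℕ) (i j : Fin (2*m)) :
    Cmat m i j = if j = i ∨ j = pA m i then 1 else -1 := by
  have hcond : ((i:ℕ)/2 = (j:ℕ)/2) ↔ (j = i ∨ j = pA m i) := by
    rw [Fin.ext_iff, Fin.ext_iff, pA_val]
    have := i.isLt; have := j.isLt
    split_ifs <;> omega
  simp only [Cmat, Matrix.of_apply]
  exact if_congr hcond rfl rfl

lemma CmatB (m : ℕ) (i j : Fin (2*m)) :
    Cmat' m i j = if j = i ∨ j = pB m i then 1 else -1 := by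
  have hcond : ((if (i:ℕ) = 0 ∨ (i:ℕ) = 2*m-1 then 0 else ((i:ℕ)+1)/2)
      = (if (j:ℕ) = 0 ∨ (j:ℕ) = 2*m-1 then 0 else ((j:ℕ)+1)/2))
      ↔ (j = i ∨ j = pB m i) := by
    rw [Fin.ext_iff, Fin.ext_iff, pB_val]
    have := i.isLt; have := j.isLt
    split_ifs <;> omega
  simp only [Cmat', Matrix.of_apply]
  exact if_congr hcond rfl rfl

theorem stmt17 (m : ℕ) (hm : 3 ≤ m) (d d' : Fin (2 * m) → ℝ)
    (hd : ∀ i, d i ≠ 0) (hd' : ∀ i, d' i ≠ 0)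
    -- d_{2k} = -d_{2k-1} (1-indexed)
    (hdpair : ∀ i j : Fin (2 * m), (i : ℕ) % 2 = 0 → (j : ℕ) = (i : ℕ) + 1 →
      d j = -d i)
    -- d'_{2k+1} = -d'_{2k} (1-indexed) and d'₁ = -d'_{2m}
    (hd'pair : ∀ i j : Fin (2 * m), (i : ℕ) % 2 = 1 → (j : ℕ) = (i : ℕ) + 1 →
      d' j = -d' i)
    (hd'wrap : ∀ i j : Fin (2 * m), (i : ℕ) = 0 → (j : ℕ) = 2 * m - 1 →
      d' i = -d' j)
    (A B : Matrix (Fin (2 * m)) (Fin (2 * m)) ℝ)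
    (hA : A = Matrix.diagonal d * Cmat m * Matrix.diagonal d)
    (hB : B = Matrix.diagonal d' * Cmat' m * Matrix.diagonal d') :
    -- ker A = {x : x_{2k-1} = x_{2k} (1-indexed)}
    (∀ x : Fin (2 * m) → ℝ, A.mulVec x = 0 ↔
      ∀ i j : Fin (2 * m), (i : ℕ) % 2 = 0 → (j : ℕ) = (i : ℕ) + 1 →
        x i = x j) ∧
    -- ker B = {x : x_{2k} = x_{2k+1} (1-indexed, k ≤ m-1) and x_{2m} = x₁}
    (∀ x : Fin (2 * m) → ℝ, B.mulVec x = 0 ↔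
      ((∀ i j : Fin (2 * m), (i : ℕ) % 2 = 1 → (j : ℕ) = (i : ℕ) + 1 →
          x i = x j) ∧
        (∀ i j : Fin (2 * m), (i : ℕ) = 2 * m - 1 → (j : ℕ) = 0 →
          x i = x j))) ∧
    -- ker A ∩ ker B is exactly the span of the all-ones vector
    (∀ x : Fin (2 * m) → ℝ, (A.mulVec x = 0 ∧ B.mulVec x = 0) ↔
      ∃ c : ℝ, x = fun _ => c) := by
  have hdpA : ∀ i, d (pA m i) = -d i := by
    intro i
    by_cases hi : (i:ℕ) % 2 = 0
    · exact hdpair i (pA m i) hi (by rw [pA_val, if_pos hi])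
    · have h1 : ((pA m i : ℕ)) % 2 = 0 := by rw [pA_val, if_neg hi]; omega
      have h2 : (i:ℕ) = (pA m i : ℕ) + 1 := by
        rw [pA_val, if_neg hi]
        have := i.isLt
        omega
      have := hdpair (pA m i) i h1 h2
      linarith
  have hdpB : ∀ i, d' (pB m i) = -d' i := by
    intro i
    have hlt := i.isLt
    by_cases h0 : (i:ℕ) = 0
    · have := hd'wrap i (pB m i) h0 (by rw [pB_val, if_pos h0])
      linarith
    · by_cases h1 : (i:ℕ) = 2*m-1
      · exact hd'wrap (pB m i) i (by rw [pB_val, if_neg h0, if_pos h1]) h1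
      · by_cases h2 : (i:ℕ) % 2 = 1
        · exact hd'pair i (pB m i) h2 (by rw [pB_val, if_neg h0, if_neg h1, if_pos h2])
        · have e1 : ((pB m i : ℕ)) % 2 = 1 := by
            rw [pB_val, if_neg h0, if_neg h1, if_neg h2]; omega
          have e2 : (i:ℕ) = (pB m i : ℕ) + 1 := by
            rw [pB_val, if_neg h0, if_neg h1, if_neg h2]; omega
          have := hd'pair (pB m i) i e1 e2
          linarith
  have keyA : ∀ x : Fin (2*m) → ℝ, A.mulVec x = 0 ↔ ∀ i, x i = x (pA m i) := by
    intro x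
    rw [hA]
    exact mycore m hm (pA m) (pA_ne m) (pA_inv m) (Cmat m) (CmatA m) d hd hdpA x
  have keyB : ∀ x : Fin (2*m) → ℝ, B.mulVec x = 0 ↔ ∀ i, x i = x (pB m i) := by
    intro x
    rw [hB]
    exact mycore m hm (pB m) (pB_ne m) (pB_inv m) (Cmat' m) (CmatB m) d' hd' hdpB x
  have part1 : ∀ x : Fin (2*m) → ℝ, A.mulVec x = 0 ↔
      ∀ i j : Fin (2*m), (i:ℕ) % 2 = 0 → (j:ℕ) = (i:ℕ) + 1 → x i = x j := by
    intro x
    rw [keyA x]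
    constructor
    · intro h i j hi hj
      have : j = pA m i := by
        apply Fin.ext
        rw [pA_val, if_pos hi, hj]
      rw [this]
      exact h i
    · intro h i
      by_cases hi : (i:ℕ) % 2 = 0
      · exact h i (pA m i) hi (by rw [pA_val, if_pos hi])
      · have h1 : ((pA m i : ℕ)) % 2 = 0 := by rw [pA_val, if_neg hi]; omega
        have h2 : (i:ℕ) = (pA m i : ℕ) + 1 := by
          rw [pA_val, if_neg hi]; omega
        exact (h (pA m i) i h1 h2).symm
  have part2 : ∀ x : Fin (2*m) → ℝ, B.mulVec x = 0 ↔
      ((∀ i j : Fin (2*m), (i:ℕ) % 2 = 1 → (j:ℕ) = (i:ℕ) + 1 → x i = x j) ∧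
       (∀ i j : Fin (2*m), (i:ℕ) = 2*m-1 → (j:ℕ) = 0 → x i = x j)) := by
    intro x
    rw [keyB x]
    constructor
    · intro h
      constructor
      · intro i j hi hj
        have hlt := j.isLt
        have hi0 : ¬ (i:ℕ) = 0 := by omega
        have hi1 : ¬ (i:ℕ) = 2*m-1 := by omega
        have : j = pB m i := by
          apply Fin.ext
          rw [pB_val, if_neg hi0, if_neg hi1, if_pos hi, hj]
        rw [this]
        exact h i
      · intro i j hi hj
        have hlt := i.isLt
        have hi0 : ¬ (i:ℕ) = 0 := by omega
        have : j = pB m i := by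
          apply Fin.ext
          rw [pB_val, if_neg hi0, if_pos hi, hj]
        rw [this]
        exact h i
    · rintro ⟨h1, h2⟩ i
      have hlt := i.isLt
      by_cases e0 : (i:ℕ) = 0
      · have hp : ((pB m i : ℕ)) = 2*m-1 := by rw [pB_val, if_pos e0]
        exact (h2 (pB m i) i hp e0).symm
      · by_cases e1 : (i:ℕ) = 2*m-1
        · exact h2 i (pB m i) e1 (by rw [pB_val, if_neg e0, if_pos e1])
        · by_cases e2 : (i:ℕ) % 2 = 1
          · exact h1 i (pB m i) e2 (by rw [pB_val, if_neg e0, if_neg e1, if_pos e2])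
          · have f1 : ((pB m i : ℕ)) % 2 = 1 := by
              rw [pB_val, if_neg e0, if_neg e1, if_neg e2]; omega
            have f2 : (i:ℕ) = (pB m i : ℕ) + 1 := by
              rw [pB_val, if_neg e0, if_neg e1, if_neg e2]; omega
            exact (h1 (pB m i) i f1 f2).symm
  refine ⟨part1, part2, ?_⟩
  intro x
  constructor
  · rintro ⟨hxA, hxB⟩
    have c1 := (part1 x).mp hxA
    have c2 := (part2 x).mp hxB
    have hm0 : 0 < 2*m := by omega
    have key : ∀ n (hn : n < 2*m), x ⟨n, hn⟩ = x ⟨0, hm0⟩ := by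
      intro n
      induction n with
      | zero => intro _; rfl
      | succ k ih =>
        intro hn
        have hk : k < 2*m := by omega
        rw [← ih hk]
        by_cases hkp : k % 2 = 0
        · exact (c1 ⟨k, hk⟩ ⟨k+1, hn⟩ hkp rfl).symm
        · exact (c2.1 ⟨k, hk⟩ ⟨k+1, hn⟩ (by show k % 2 = 1; omega) rfl).symm
    refine ⟨x ⟨0, hm0⟩, funext fun i => ?_⟩
    have := key i.val i.isLt
    simpa using this
  · rintro ⟨c, rfl⟩
    constructor
    · exact (part1 _).mpr (fun _ _ _ _ => rfl)
    · exact (part2 _).mpr ⟨fun _ _ _ _ => rfl, fun _ _ _ _ => rfl⟩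
end

section
/- Let m ≥ 3, let C be the 2m×2m real matrix whose (i,j) entry is 1 if ⌈i/2⌉ = ⌈j/2⌉ and −1 otherwise, and let d ∈ ℝ^{2m} have all entries nonzero with d_{2k} = −d_{2k−1} for 1 ≤ k ≤ m. Set A₀ = diag(d)·C·diag(d), let A be the (2m+1)×(2m+1) matrix whose upper-left 2m×2m block is A₀ and all other entries 0, and let B be the (2m+1)×(2m+1) matrix whose lower-right 2m×2m block is A₀ and all other entries 0. Then the kernel of A is {x ∈ ℝ^{2m+1} : x_{2k−1} = x_{2k} for 1 ≤ k ≤ m}, the kernel of B is {x ∈ ℝ^{2m+1} : x_{2k} = x_{2k+1} for 1 ≤ k ≤ m}, and the intersection ker(A) ∩ ker(B) is exactly the one-dimensional span of the all-ones vector 𝟏 in ℝ^{2m+1}. -/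
/-- The `(2m+1) × (2m+1)` matrix whose upper-left `2m × 2m` block is `M` and
all other entries are `0`. -/
noncomputable def upLeft (m : ℕ) (M : Matrix (Fin (2 * m)) (Fin (2 * m)) ℝ) :
    Matrix (Fin (2 * m + 1)) (Fin (2 * m + 1)) ℝ :=
  Matrix.of fun i j =>
    if h : (i : ℕ) < 2 * m ∧ (j : ℕ) < 2 * m then M ⟨i, h.1⟩ ⟨j, h.2⟩ else 0

/-- The `(2m+1) × (2m+1)` matrix whose lower-right `2m × 2m` block is `M` and
all other entries are `0`. -/
noncomputable def lowRight (m : ℕ) (M : Matrix (Fin (2 * m)) (Fin (2 * m)) ℝ) :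
    Matrix (Fin (2 * m + 1)) (Fin (2 * m + 1)) ℝ :=
  Matrix.of fun i j =>
    if h : 0 < (i : ℕ) ∧ 0 < (j : ℕ) then
      M ⟨(i : ℕ) - 1, by have := i.isLt; omega⟩
        ⟨(j : ℕ) - 1, by have := j.isLt; omega⟩
    else 0

lemma kerA0 (m : ℕ) (hm : 3 ≤ m) (d : Fin (2 * m) → ℝ) (hd : ∀ i, d i ≠ 0)
    (hdpair : ∀ i j : Fin (2 * m), (i : ℕ) % 2 = 0 → (j : ℕ) = (i : ℕ) + 1 → d j = -d i)
    (v : Fin (2 * m) → ℝ) :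
    (Matrix.diagonal d * Cmat m * Matrix.diagonal d).mulVec v = 0 ↔
    ∀ i j : Fin (2 * m), (i : ℕ) % 2 = 0 → (j : ℕ) = (i : ℕ) + 1 → v i = v j := by
  set y : Fin (2 * m) → ℝ := fun j => d j * v j with hy
  set S : ℝ := ∑ j : Fin (2 * m), y j with hS
  have hlt : ∀ i : Fin (2 * m), (if (i : ℕ) % 2 = 0 then (i : ℕ) + 1 else (i : ℕ) - 1) < 2 * m := by
    intro i; have := i.isLt; split <;> omega
  set σ : Fin (2 * m) → Fin (2 * m) :=
    fun i => ⟨if (i : ℕ) % 2 = 0 then (i : ℕ) + 1 else (i : ℕ) - 1, hlt i⟩ with hσ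
  have hσval : ∀ i : Fin (2 * m),
      (σ i : ℕ) = if (i : ℕ) % 2 = 0 then (i : ℕ) + 1 else (i : ℕ) - 1 := fun i => rfl
  have hinv : Function.Involutive σ := by
    intro i
    have h1 := i.isLt
    have hvi := hσval i
    rcases Nat.even_or_odd (i : ℕ) with h | h
    · have h0 : (i : ℕ) % 2 = 0 := Nat.even_iff.mp h
      rw [if_pos h0] at hvi
      have hvs := hσval (σ i)
      rw [hvi, if_neg (by omega)] at hvs
      apply Fin.ext; omega
    · have h0 : (i : ℕ) % 2 = 1 := Nat.odd_iff.mp h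
      rw [if_neg (by omega)] at hvi
      have hvs := hσval (σ i)
      rw [hvi, if_pos (by omega)] at hvs
      apply Fin.ext; omega
  have hne : ∀ i : Fin (2 * m), i ≠ σ i := by
    intro i h
    have hcv := congrArg Fin.val h
    rw [hσval] at hcv
    have h1 := i.isLt
    rcases Nat.even_or_odd (i : ℕ) with h | h
    · have h0 : (i : ℕ) % 2 = 0 := Nat.even_iff.mp h
      rw [if_pos h0] at hcv; omega
    · have h0 : (i : ℕ) % 2 = 1 := Nat.odd_iff.mp h
      rw [if_neg (by omega)] at hcv; omega
  have hrow : ∀ i, (Matrix.diagonal d * Cmat m * Matrix.diagonal d).mulVec v i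
      = d i * (∑ j : Fin (2 * m), (if (i : ℕ) / 2 = (j : ℕ) / 2 then (1:ℝ) else -1) * y j) := by
    intro i
    rw [← Matrix.mulVec_mulVec, ← Matrix.mulVec_mulVec, Matrix.mulVec_diagonal]
    have hdv : (Matrix.diagonal d).mulVec v = y := by
      funext j; rw [Matrix.mulVec_diagonal, hy]
    rw [hdv]
    congr 1
  have hsum : ∀ i : Fin (2 * m),
      (∑ j : Fin (2 * m), (if (i : ℕ) / 2 = (j : ℕ) / 2 then (1:ℝ) else -1) * y j)
      = 2 * (y i + y (σ i)) - S := by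
    intro i
    have key : ∀ j : Fin (2 * m),
        (if (i : ℕ) / 2 = (j : ℕ) / 2 then (1:ℝ) else -1) * y j
        = 2 * ((if j = i then y j else 0) + (if j = σ i then y j else 0)) - y j := by
      intro j
      have hji : (i : ℕ) / 2 = (j : ℕ) / 2 ↔ (j = i ∨ j = σ i) := by
        rw [Fin.ext_iff, Fin.ext_iff, hσval]
        have h1 := i.isLt; have h2 := j.isLt
        rcases Nat.even_or_odd (i : ℕ) with h | h
        · have h0 : (i : ℕ) % 2 = 0 := Nat.even_iff.mp h
          rw [if_pos h0]; omega
        · have h0 : (i : ℕ) % 2 = 1 := Nat.odd_iff.mp h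
          rw [if_neg (by omega)]; omega
      by_cases h : (i : ℕ) / 2 = (j : ℕ) / 2
      · rcases hji.mp h with h' | h'
        · subst h'
          rw [if_pos h, if_pos rfl, if_neg (hne j)]
          ring
        · subst h'
          rw [if_pos h, if_neg (Ne.symm (hne i)), if_pos rfl]
          ring
      · have h1 : j ≠ i := fun h' => h (hji.mpr (Or.inl h'))
        have h2 : j ≠ σ i := fun h' => h (hji.mpr (Or.inr h'))
        rw [if_neg h, if_neg h1, if_neg h2]
        ring
    rw [Finset.sum_congr rfl (fun j _ => key j)]
    rw [Finset.sum_sub_distrib, ← Finset.mul_sum, Finset.sum_add_distrib,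
      Finset.sum_ite_eq' Finset.univ i y, Finset.sum_ite_eq' Finset.univ (σ i) y]
    simp [hS]
  have hσeven : ∀ i : Fin (2 * m), (i : ℕ) % 2 = 0 → ((σ i : ℕ) = (i : ℕ) + 1) := by
    intro i h; rw [hσval, if_pos h]
  have hsum2 : ∑ i : Fin (2 * m), y (σ i) = S := by
    rw [hS]
    exact Equiv.sum_comp (hinv.toPerm σ) y
  constructor
  · intro h i j hi hj
    have hz : ∀ k : Fin (2 * m), d k * (2 * (y k + y (σ k)) - S) = 0 := by
      intro k
      have hk := congrFun h k
      rw [hrow, hsum] at hk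
      simpa using hk
    have h1 : ∀ k : Fin (2 * m), 2 * (y k + y (σ k)) = S := by
      intro k
      rcases mul_eq_zero.mp (hz k) with h' | h'
      · exact absurd h' (hd k)
      · linarith
    have hS0 : S = 0 := by
      have hsum3 : ∑ k : Fin (2 * m), 2 * (y k + y (σ k)) = ∑ _k : Fin (2 * m), S :=
        Finset.sum_congr rfl (fun k _ => h1 k)
      rw [Finset.sum_const, Finset.card_univ, Fintype.card_fin] at hsum3
      rw [← Finset.mul_sum, Finset.sum_add_distrib, hsum2, ← hS] at hsum3
      rw [nsmul_eq_mul] at hsum3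
      have hcast : (6 : ℝ) ≤ ((2 * m : ℕ) : ℝ) := by exact_mod_cast (by omega : 6 ≤ 2 * m)
      nlinarith [hsum3]
    have h2 := h1 i
    rw [hS0] at h2
    have hσij : σ i = j := by apply Fin.ext; rw [hσval, if_pos hi]; omega
    rw [hσij] at h2
    have hdj : d j = -d i := hdpair i j hi hj
    have h3 : d i * (v i - v j) = 0 := by
      simp only [hy, hdj] at h2; ring_nf at h2 ⊢; linarith
    rcases mul_eq_zero.mp h3 with h' | h'
    · exact absurd h' (hd i)
    · linarith
  · intro h
    have hz : ∀ k : Fin (2 * m), y k + y (σ k) = 0 := by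
      intro k
      rcases Nat.even_or_odd (k : ℕ) with he | ho
      · have h0 : (k : ℕ) % 2 = 0 := Nat.even_iff.mp he
        have hv := h k (σ k) h0 (hσeven k h0)
        have hdj := hdpair k (σ k) h0 (hσeven k h0)
        simp only [hy, hdj, hv]; ring
      · have h1 : (k : ℕ) % 2 = 1 := Nat.odd_iff.mp ho
        set k' := σ k with hk'
        have hk'val : (k' : ℕ) = (k : ℕ) - 1 := by rw [hk', hσval, if_neg (by omega)]
        have h0' : (k' : ℕ) % 2 = 0 := by omega
        have hkk' : σ k' = k := by rw [hk']; exact hinv k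
        have hv := h k' (σ k') h0' (by rw [hkk']; omega)
        have hdj := hdpair k' (σ k') h0' (by rw [hkk']; omega)
        rw [hkk'] at hv hdj
        simp only [hy, hdj, hv]; ring
    have hS0 : S = 0 := by
      have h2 : S + S = ∑ k : Fin (2 * m), (y k + y (σ k)) := by
        rw [Finset.sum_add_distrib, hsum2, ← hS]
      rw [Finset.sum_eq_zero (fun k _ => hz k)] at h2
      linarith
    funext i
    rw [hrow, hsum, hz i, hS0]
    simp

lemma upLeft_mulVec (m : ℕ) (M : Matrix (Fin (2 * m)) (Fin (2 * m)) ℝ)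
    (x : Fin (2 * m + 1) → ℝ) :
    (upLeft m M).mulVec x = 0 ↔ M.mulVec (fun k => x k.castSucc) = 0 := by
  have hul1 : ∀ (i j : Fin (2 * m)), upLeft m M i.castSucc j.castSucc = M i j := by
    intro i j
    rw [upLeft, Matrix.of_apply, dif_pos ⟨by simpa using i.isLt, by simpa using j.isLt⟩]
    congr 1 <;> exact Fin.ext (by simp)
  have hmv : ∀ (i : Fin (2 * m)), (upLeft m M).mulVec x i.castSucc
      = M.mulVec (fun k => x k.castSucc) i := by
    intro i
    simp only [Matrix.mulVec, dotProduct]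
    rw [Fin.sum_univ_castSucc]
    have hlast : upLeft m M i.castSucc (Fin.last (2 * m)) = 0 := by
      rw [upLeft, Matrix.of_apply, dif_neg]
      simp
    rw [hlast, zero_mul, add_zero]
    exact Finset.sum_congr rfl (fun j _ => by rw [hul1])
  have hmv0 : (upLeft m M).mulVec x (Fin.last (2 * m)) = 0 := by
    simp only [Matrix.mulVec, dotProduct]
    apply Finset.sum_eq_zero
    intro j _
    have : upLeft m M (Fin.last (2 * m)) j = 0 := by
      rw [upLeft, Matrix.of_apply, dif_neg]
      simp
    rw [this, zero_mul]
  constructor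
  · intro h
    funext i
    rw [← hmv i]
    exact congrFun h _
  · intro h
    funext i
    induction i using Fin.lastCases with
    | last => simpa using hmv0
    | cast i => rw [Pi.zero_apply, hmv i]; exact congrFun h i

lemma lowRight_mulVec (m : ℕ) (M : Matrix (Fin (2 * m)) (Fin (2 * m)) ℝ)
    (x : Fin (2 * m + 1) → ℝ) :
    (lowRight m M).mulVec x = 0 ↔ M.mulVec (fun k => x k.succ) = 0 := by
  have hul1 : ∀ (i j : Fin (2 * m)), lowRight m M i.succ j.succ = M i j := by
    intro i j
    rw [lowRight, Matrix.of_apply, dif_pos ⟨by simp, by simp⟩]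
    congr 1 <;> exact Fin.ext (by simp)
  have hmv : ∀ (i : Fin (2 * m)), (lowRight m M).mulVec x i.succ
      = M.mulVec (fun k => x k.succ) i := by
    intro i
    simp only [Matrix.mulVec, dotProduct]
    rw [Fin.sum_univ_succ]
    have h0 : lowRight m M i.succ 0 = 0 := by
      rw [lowRight, Matrix.of_apply, dif_neg]
      simp
    rw [h0, zero_mul, zero_add]
    exact Finset.sum_congr rfl (fun j _ => by rw [hul1])
  have hmv0 : (lowRight m M).mulVec x 0 = 0 := by
    simp only [Matrix.mulVec, dotProduct]
    apply Finset.sum_eq_zero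
    intro j _
    have : lowRight m M 0 j = 0 := by
      rw [lowRight, Matrix.of_apply, dif_neg]
      simp
    rw [this, zero_mul]
  constructor
  · intro h
    funext i
    rw [← hmv i]
    exact congrFun h _
  · intro h
    funext i
    induction i using Fin.cases with
    | zero => simpa using hmv0
    | succ i => rw [Pi.zero_apply, hmv i]; exact congrFun h i

theorem stmt18 (m : ℕ) (hm : 3 ≤ m) (d : Fin (2 * m) → ℝ)
    (hd : ∀ i, d i ≠ 0)
    -- d_{2k} = -d_{2k-1} (1-indexed)
    (hdpair : ∀ i j : Fin (2 * m), (i : ℕ) % 2 = 0 → (j : ℕ) = (i : ℕ) + 1 →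
      d j = -d i)
    (A B : Matrix (Fin (2 * m + 1)) (Fin (2 * m + 1)) ℝ)
    (hA : A = upLeft m (Matrix.diagonal d * Cmat m * Matrix.diagonal d))
    (hB : B = lowRight m (Matrix.diagonal d * Cmat m * Matrix.diagonal d)) :
    -- ker A = {x : x_{2k-1} = x_{2k} (1-indexed, 1 ≤ k ≤ m)}
    (∀ x : Fin (2 * m + 1) → ℝ, A.mulVec x = 0 ↔
      ∀ i j : Fin (2 * m + 1), (i : ℕ) % 2 = 0 → (j : ℕ) = (i : ℕ) + 1 →
        x i = x j) ∧
    -- ker B = {x : x_{2k} = x_{2k+1} (1-indexed, 1 ≤ k ≤ m)}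
    (∀ x : Fin (2 * m + 1) → ℝ, B.mulVec x = 0 ↔
      ∀ i j : Fin (2 * m + 1), (i : ℕ) % 2 = 1 → (j : ℕ) = (i : ℕ) + 1 →
        x i = x j) ∧
    -- ker A ∩ ker B is exactly the span of the all-ones vector
    (∀ x : Fin (2 * m + 1) → ℝ, (A.mulVec x = 0 ∧ B.mulVec x = 0) ↔
      ∃ c : ℝ, x = fun _ => c) := by
  subst hA hB
  have resA : ∀ x : Fin (2 * m + 1) → ℝ,
      (upLeft m (Matrix.diagonal d * Cmat m * Matrix.diagonal d)).mulVec x = 0 ↔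
      ∀ i j : Fin (2 * m + 1), (i : ℕ) % 2 = 0 → (j : ℕ) = (i : ℕ) + 1 → x i = x j := by
    intro x
    rw [upLeft_mulVec, kerA0 m hm d hd hdpair]
    constructor
    · intro h i j hi hj
      have hj2 := j.isLt
      have hjlt : (j : ℕ) < 2 * m := by omega
      have hilt : (i : ℕ) < 2 * m := by omega
      have hkey := h ⟨(i : ℕ), hilt⟩ ⟨(j : ℕ), hjlt⟩ hi hj
      have e1 : (⟨(i : ℕ), hilt⟩ : Fin (2 * m)).castSucc = i := Fin.ext (by simp)
      have e2 : (⟨(j : ℕ), hjlt⟩ : Fin (2 * m)).castSucc = j := Fin.ext (by simp)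
      rw [e1, e2] at hkey
      exact hkey
    · intro h i j hi hj
      exact h i.castSucc j.castSucc (by simpa using hi) (by simpa using hj)
  have resB : ∀ x : Fin (2 * m + 1) → ℝ,
      (lowRight m (Matrix.diagonal d * Cmat m * Matrix.diagonal d)).mulVec x = 0 ↔
      ∀ i j : Fin (2 * m + 1), (i : ℕ) % 2 = 1 → (j : ℕ) = (i : ℕ) + 1 → x i = x j := by
    intro x
    rw [lowRight_mulVec, kerA0 m hm d hd hdpair]
    constructor
    · intro h i j hi hj
      have hj2 := j.isLt
      have hi1 : 1 ≤ (i : ℕ) := by omega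
      have hilt : (i : ℕ) - 1 < 2 * m := by omega
      have hjlt : (i : ℕ) < 2 * m := by omega
      have hkey := h ⟨(i : ℕ) - 1, hilt⟩ ⟨(i : ℕ), hjlt⟩ (by simp; omega) (by simp; omega)
      have e1 : (⟨(i : ℕ) - 1, hilt⟩ : Fin (2 * m)).succ = i := Fin.ext (by simp; omega)
      have e2 : (⟨(i : ℕ), hjlt⟩ : Fin (2 * m)).succ = j := Fin.ext (by simp; omega)
      rw [e1, e2] at hkey
      exact hkey
    · intro h i j hi hj
      exact h i.succ j.succ (by simp; omega) (by simp; omega)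
  refine ⟨resA, resB, fun x => ⟨?_, ?_⟩⟩
  · rintro ⟨hA', hB'⟩
    have hstep : ∀ i j : Fin (2 * m + 1), (j : ℕ) = (i : ℕ) + 1 → x i = x j := by
      intro i j hj
      rcases Nat.even_or_odd (i : ℕ) with he | ho
      · exact (resA x).mp hA' i j (Nat.even_iff.mp he) hj
      · exact (resB x).mp hB' i j (Nat.odd_iff.mp ho) hj
    have hall : ∀ n (hn : n < 2 * m + 1), x ⟨n, hn⟩ = x ⟨0, by omega⟩ := by
      intro n
      induction n with
      | zero => intro hn; rfl
      | succ k ih =>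
        intro hn
        have hk : k < 2 * m + 1 := by omega
        rw [← hstep ⟨k, hk⟩ ⟨k + 1, hn⟩ rfl]
        exact ih hk
    refine ⟨x ⟨0, by omega⟩, funext fun k => ?_⟩
    simpa using hall (k : ℕ) k.isLt
  · rintro ⟨c, rfl⟩
    exact ⟨(resA _).mpr (fun i j _ _ => rfl), (resB _).mpr (fun i j _ _ => rfl)⟩
end
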